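/- Every rearrangement-invariant space X on [0,1] has at least one of the properties (P) or (P'); that is, either ‖e¹₁‖_X < ‖e¹₁ + t e¹₂‖_X for every t > 0, or ‖e¹₁‖_{X'} < ‖e¹₁ + t e¹₂‖_{X'} for every t > 0. -/

import Mathlib

open MeasureTheory Set Filter Topology

noncomputable section

/-- A Köthe function space on `(Ω, μ)`: a Banach space of (equivalence classes of)
locally integrable Borel functions, represented here at the level of functions.
`Mem f` says that (the class of) `f` belongs to the space, and `normF f` is its norm. -/
structure KotheSpace (Ω : Type*) [MeasurableSpace Ω] (μ : Measure Ω) where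
  Mem : (Ω → ℝ) → Prop
  normF : (Ω → ℝ) → ℝ
  mem_congr : ∀ f g : Ω → ℝ, f =ᵐ[μ] g → Mem f → Mem g
  norm_congr : ∀ f g : Ω → ℝ, f =ᵐ[μ] g → Mem f → normF f = normF g
  measurable_of_mem : ∀ f, Mem f → Measurable f
  integrable_of_mem : ∀ f, Mem f → ∀ A : Set Ω, MeasurableSet A → μ A < ⊤ → IntegrableOn f A μ
  zero_mem : Mem 0
  add_mem : ∀ f g, Mem f → Mem g → Mem (f + g)
  smul_mem : ∀ (c : ℝ) (f), Mem f → Mem (c • f)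
  norm_nonneg' : ∀ f, Mem f → 0 ≤ normF f
  norm_eq_zero_iff : ∀ f, Mem f → (normF f = 0 ↔ f =ᵐ[μ] 0)
  norm_add_le : ∀ f g, Mem f → Mem g → normF (f + g) ≤ normF f + normF g
  norm_smul' : ∀ (c : ℝ) (f), Mem f → normF (c • f) = |c| * normF f
  mem_of_le : ∀ f g, Measurable f → Mem g → (∀ᵐ s ∂μ, |f s| ≤ |g s|) → Mem f
  norm_mono : ∀ f g, Mem f → Mem g → (∀ᵐ s ∂μ, |f s| ≤ |g s|) → normF f ≤ normF g
  indicator_mem : ∀ A : Set Ω, MeasurableSet A → μ A < ⊤ → Mem (A.indicator fun _ => (1 : ℝ))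
  complete' : ∀ f : ℕ → Ω → ℝ, (∀ n, Mem (f n)) →
    (∀ ε : ℝ, 0 < ε → ∃ N : ℕ, ∀ m ≥ N, ∀ n ≥ N, normF (f m - f n) < ε) →
    ∃ g, Mem g ∧ Tendsto (fun n => normF (f n - g)) atTop (nhds 0)

variable {Ω : Type*} [MeasurableSpace Ω] {μ : Measure Ω}

/-- Membership in the Köthe dual `X'`. -/
def KotheSpace.DualMem (X : KotheSpace Ω μ) (g : Ω → ℝ) : Prop :=
  Measurable g ∧ ∀ f, X.Mem f → Integrable (fun s => |f s| * |g s|) μ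

/-- The norm of the Köthe dual `X'`. -/
def KotheSpace.dualNormF (X : KotheSpace Ω μ) (g : Ω → ℝ) : ℝ :=
  sSup {r | ∃ f, X.Mem f ∧ X.normF f ≤ 1 ∧ r = ∫ s, |f s| * |g s| ∂μ}

/-- The Köthe dual `X'` is a norming subspace of `X*`. -/
def KotheSpace.DualNorming (X : KotheSpace Ω μ) : Prop :=
  ∀ f, X.Mem f → X.normF f =
    sSup {r | ∃ g, X.DualMem g ∧ X.dualNormF g ≤ 1 ∧ r = ∫ s, f s * g s ∂μ}

/-- `X` is order-continuous: if `fₙ ↓ 0` a.e. then `‖fₙ‖ ↓ 0`. -/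
def KotheSpace.OrderCont (X : KotheSpace Ω μ) : Prop :=
  ∀ f : ℕ → Ω → ℝ, (∀ n, X.Mem (f n)) →
    (∀ᵐ s ∂μ, Antitone (fun n => f n s) ∧ Tendsto (fun n => f n s) atTop (nhds 0)) →
    Tendsto (fun n => X.normF (f n)) atTop (nhds 0)

/-- `X` has the Fatou property: if `0 ≤ fₙ ↑ g` a.e. with `sup ‖fₙ‖ < ∞`,
then `g ∈ X` and `‖g‖ = sup ‖fₙ‖`. -/
def KotheSpace.Fatou (X : KotheSpace Ω μ) : Prop :=
  ∀ (f : ℕ → Ω → ℝ) (g : Ω → ℝ), (∀ n, X.Mem (f n)) → Measurable g →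
    (∀ᵐ s ∂μ, Monotone (fun n => f n s) ∧ 0 ≤ f 0 s ∧
      Tendsto (fun n => f n s) atTop (nhds (g s))) →
    BddAbove (Set.range fun n => X.normF (f n)) →
    X.Mem g ∧ X.normF g = ⨆ n, X.normF (f n)

/-- A linear map between Köthe function spaces, given at the level of functions. -/
structure KotheOp {Ω₁ : Type*} [MeasurableSpace Ω₁] {μ₁ : Measure Ω₁}
    {Ω₂ : Type*} [MeasurableSpace Ω₂] {μ₂ : Measure Ω₂}
    (X : KotheSpace Ω₁ μ₁) (Y : KotheSpace Ω₂ μ₂) where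
  toFun : (Ω₁ → ℝ) → Ω₂ → ℝ
  mem_map : ∀ f, X.Mem f → Y.Mem (toFun f)
  congr_map : ∀ f g, X.Mem f → X.Mem g → f =ᵐ[μ₁] g → toFun f =ᵐ[μ₂] toFun g
  add_map : ∀ f g, X.Mem f → X.Mem g → toFun (f + g) =ᵐ[μ₂] toFun f + toFun g
  smul_map : ∀ (c : ℝ) (f), X.Mem f → toFun (c • f) =ᵐ[μ₂] c • toFun f

namespace KotheOp

variable {Ω₁ : Type*} [MeasurableSpace Ω₁] {μ₁ : Measure Ω₁}
  {Ω₂ : Type*} [MeasurableSpace Ω₂] {μ₂ : Measure Ω₂}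
  {X : KotheSpace Ω₁ μ₁} {Y : KotheSpace Ω₂ μ₂}

/-- `T` is an isometry. -/
def Isometric (T : KotheOp X Y) : Prop :=
  ∀ f, X.Mem f → Y.normF (T.toFun f) = X.normF f

/-- `T` is surjective (onto `Y`). -/
def Surj (T : KotheOp X Y) : Prop :=
  ∀ g, Y.Mem g → ∃ f, X.Mem f ∧ T.toFun f =ᵐ[μ₂] g

/-- `T` is a bounded operator. -/
def Bounded (T : KotheOp X Y) : Prop :=
  ∃ C : ℝ, ∀ f, X.Mem f → Y.normF (T.toFun f) ≤ C * X.normF f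

/-- `T` is elementary: `Tf(s) = a(s)·f(σ(s))` a.e. for a Borel function `a` and
a Borel map `σ`. -/
def Elementary (T : KotheOp X Y) : Prop :=
  ∃ (a : Ω₂ → ℝ) (σ : Ω₂ → Ω₁), Measurable a ∧ Measurable σ ∧
    ∀ f, X.Mem f → T.toFun f =ᵐ[μ₂] fun s => a s * f (σ s)

/-- `T` is disjointness-preserving. -/
def DisjPres (T : KotheOp X Y) : Prop :=
  ∀ f g, X.Mem f → X.Mem g → (∀ᵐ s ∂μ₁, min |f s| |g s| = 0) →
    ∀ᵐ s ∂μ₂, min |T.toFun f s| |T.toFun g s| = 0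

/-- `T` is `σ(X,X')`-continuous; equivalently the adjoint `T*` maps the Köthe dual `Y'`
into the Köthe dual `X'`. -/
def WeakCont (T : KotheOp X Y) : Prop :=
  ∀ g, Y.DualMem g → ∃ g', X.DualMem g' ∧
    ∀ f, X.Mem f → ∫ s, T.toFun f s * g s ∂μ₂ = ∫ s, f s * g' s ∂μ₁

end KotheOp

/-- The unit interval `[0,1]`. -/
abbrev UI : Type := Set.Icc (0 : ℝ) 1

/-- Lebesgue measure on `[0,1]`. -/
def lambdaI : Measure UI := Measure.comap Subtype.val volume

/-- A rearrangement-invariant function space on `[0,1]`. -/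
structure RISpace extends KotheSpace UI lambdaI where
  oc_or_fatou : toKotheSpace.OrderCont ∨ toKotheSpace.Fatou
  rearr_inv : ∀ τ : UI → UI, Measurable τ →
    (∃ τ' : UI → UI, Measurable τ' ∧ (∀ t, τ' (τ t) = t) ∧ ∀ t, τ (τ' t) = t) →
    MeasurePreserving τ lambdaI lambdaI →
    ∀ f : UI → ℝ, (toKotheSpace.Mem f ↔ toKotheSpace.Mem (f ∘ τ)) ∧
      (toKotheSpace.Mem f → toKotheSpace.normF (f ∘ τ) = toKotheSpace.normF f)
  norm_one : toKotheSpace.normF (fun _ => 1) = 1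

/-- The dyadic step function `e^N_i = χ_{((i-1)2^{-N}, i 2^{-N}]}` on `[0,1]`. -/
def dyadE (N i : ℕ) : UI → ℝ :=
  Set.indicator {t : UI | ((i : ℝ) - 1) / 2 ^ N < (t : ℝ) ∧ (t : ℝ) ≤ (i : ℝ) / 2 ^ N}
    fun _ => (1 : ℝ)

/-- `X` is isometrically equal to `L₂[0,1]`. -/
def RISpace.eqL2 (X : RISpace) : Prop :=
  ∀ f, X.Mem f → X.normF f = Real.sqrt (∫ s, (f s) ^ 2 ∂lambdaI)

/-- Property (P): `‖e¹₁‖ < ‖e¹₁ + t e¹₂‖` for all `t > 0`. -/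
def RISpace.PropP (X : RISpace) : Prop :=
  ∀ t : ℝ, 0 < t → X.normF (dyadE 1 1) < X.normF (dyadE 1 1 + t • dyadE 1 2)

/-- Property (P'): the Köthe dual `X'` has property (P). -/
def RISpace.PropP' (X : RISpace) : Prop :=
  ∀ t : ℝ, 0 < t → X.dualNormF (dyadE 1 1) < X.dualNormF (dyadE 1 1 + t • dyadE 1 2)


namespace Stmt12

abbrev I01 : Set ℝ := Set.Icc 0 1

lemma me_val : MeasurableEmbedding (Subtype.val : UI → ℝ) :=
  MeasurableEmbedding.subtype_coe measurableSet_Icc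

lemma lambdaI_apply (A : Set UI) : lambdaI A = volume (Subtype.val '' A) :=
  me_val.comap_apply _ _

instance : IsProbabilityMeasure lambdaI :=
  ⟨by rw [lambdaI, me_val.comap_apply, Subtype.coe_image_univ]; simp⟩

lemma integral_UI (G : ℝ → ℝ) :
    ∫ x : UI, G x.val ∂lambdaI = ∫ y in I01, G y :=
  MeasureTheory.integral_subtype_comap measurableSet_Icc G

/-- Two-interval rotation by `δ` on `(0, L]`, extended by the identity. -/
def rot (L δ x : ℝ) : ℝ :=
  if x ∈ Ioc 0 (L - δ) then x + δ else if x ∈ Ioc (L - δ) L then x + δ - L else x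

variable {L δ x : ℝ}

lemma rot_in1 (h : x ∈ Ioc 0 (L - δ)) : rot L δ x = x + δ := if_pos h

lemma rot_in2 (h1 : x ∉ Ioc 0 (L - δ)) (h2 : x ∈ Ioc (L - δ) L) : rot L δ x = x + δ - L := by
  rw [rot, if_neg h1, if_pos h2]

lemma rot_out (hx : x ∉ Ioc (0:ℝ) L) (hδ : 0 < δ) (hδL : δ < L) : rot L δ x = x := by
  rw [Set.mem_Ioc] at hx; push_neg at hx
  rw [rot, if_neg, if_neg] <;> rw [Set.mem_Ioc] <;> push_neg <;> intro h0 <;>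
    first
      | linarith [hx h0]
      | (have h0' : (0:ℝ) < x := by linarith
         linarith [hx h0'])

lemma rot_mem (hx : x ∈ Ioc (0:ℝ) L) (hδ : 0 < δ) (hδL : δ < L) : rot L δ x ∈ Ioc (0:ℝ) L := by
  rcases hx with ⟨a, b⟩
  by_cases h1 : x ∈ Ioc 0 (L - δ)
  · rw [rot_in1 h1]; rcases h1 with ⟨c, d⟩; exact ⟨by linarith, by linarith⟩
  · have h2 : x ∈ Ioc (L - δ) L := by
      rw [Set.mem_Ioc] at h1 ⊢; push_neg at h1
      exact ⟨h1 a, b⟩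
    rw [rot_in2 h1 h2]; rcases h2 with ⟨c, d⟩; exact ⟨by linarith, by linarith⟩

lemma rot_left_inv (hδ : 0 < δ) (hδL : δ < L) (x : ℝ) : rot L (L - δ) (rot L δ x) = x := by
  by_cases h1 : x ∈ Ioc 0 (L - δ)
  · rw [rot_in1 h1]
    rcases h1 with ⟨a, b⟩
    rw [rot_in2 (by rw [Set.mem_Ioc, sub_sub_cancel]; push_neg; intro; linarith)
      (by rw [Set.mem_Ioc, sub_sub_cancel]; exact ⟨by linarith, by linarith⟩)]
    ring
  · by_cases h2 : x ∈ Ioc (L - δ) L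
    · rw [rot_in2 h1 h2]
      rcases h2 with ⟨a, b⟩
      rw [rot_in1 (by rw [Set.mem_Ioc, sub_sub_cancel]; exact ⟨by linarith, by linarith⟩)]
      ring
    · have hx : x ∉ Ioc (0:ℝ) L := by
        rw [Set.mem_Ioc] at h1 h2 ⊢; push_neg at h1 h2 ⊢; intro h0
        exact h2 (h1 h0)
      rw [rot_out hx hδ hδL, rot_out hx (by linarith) (by linarith)]

lemma measurable_rot : Measurable (rot L δ) := by
  unfold rot
  exact Measurable.ite measurableSet_Ioc (measurable_id.add_const δ)
    (Measurable.ite measurableSet_Ioc ((measurable_id.add_const δ).sub_const L) measurable_id)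

lemma vol_translate (c : ℝ) (B : Set ℝ) : volume ((fun x => x + c) ⁻¹' B) = volume B := by
  simpa [add_comm] using MeasureTheory.measure_preimage_add volume c B

lemma measurePreserving_rot (hδ : 0 < δ) (hδL : δ < L) :
    MeasurePreserving (rot L δ) volume volume := by
  refine ⟨measurable_rot, ?_⟩
  refine Measure.ext fun A hA => ?_
  rw [Measure.map_apply measurable_rot hA]
  have hpre : rot L δ ⁻¹' A =
      ((fun x => x + δ) ⁻¹' (A ∩ Ioc δ L)) ∪ (((fun x => x + (δ - L)) ⁻¹' (A ∩ Ioc 0 δ)) ∪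
        (A \ Ioc 0 L)) := by
    ext y
    simp only [Set.mem_preimage, Set.mem_union, Set.mem_inter_iff, Set.mem_diff, Set.mem_Ioc]
    by_cases h1 : y ∈ Ioc 0 (L - δ)
    · rw [rot_in1 h1]
      rcases h1 with ⟨a, b⟩
      constructor
      · intro hy; exact Or.inl ⟨hy, by constructor <;> linarith⟩
      · rintro (⟨hy, _⟩ | (⟨hy, hy1, hy2⟩ | ⟨hy, hout⟩))
        · exact hy
        · exfalso; linarith
        · exfalso; exact hout ⟨a, by linarith⟩
    · by_cases h2 : y ∈ Ioc (L - δ) L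
      · rw [rot_in2 h1 h2]
        rcases h2 with ⟨a, b⟩
        constructor
        · intro hy
          refine Or.inr (Or.inl ⟨?_, by constructor <;> linarith⟩)
          show y + (δ - L) ∈ A
          convert hy using 1; ring
        · rintro (⟨hy, hy1, hy2⟩ | (⟨hy, hy1, hy2⟩ | ⟨hy, hout⟩))
          · exfalso; linarith
          · show y + δ - L ∈ A; convert hy using 1; ring
          · exfalso; exact hout ⟨by linarith, b⟩
      · have hy3 : y ∉ Ioc (0:ℝ) L := by
          rw [Set.mem_Ioc] at h1 h2 ⊢; push_neg at h1 h2 ⊢; intro h0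
          exact h2 (h1 h0)
        rw [rot_out hy3 hδ hδL]
        constructor
        · intro hy; exact Or.inr (Or.inr ⟨hy, hy3⟩)
        · rintro (⟨hy, hy1, hy2⟩ | (⟨hy, hy1, hy2⟩ | ⟨hy, _⟩))
          · exfalso
            exact h1 ⟨by linarith, by linarith⟩
          · exfalso
            exact h2 ⟨by linarith, by linarith⟩
          · exact hy
  rw [hpre]
  have hm1 : MeasurableSet ((fun x : ℝ => x + δ) ⁻¹' (A ∩ Ioc δ L)) :=
    (hA.inter measurableSet_Ioc).preimage (measurable_id.add_const δ)
  have hm2 : MeasurableSet ((fun x : ℝ => x + (δ - L)) ⁻¹' (A ∩ Ioc 0 δ)) :=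
    (hA.inter measurableSet_Ioc).preimage (measurable_id.add_const (δ - L))
  have hm3 : MeasurableSet (A \ Ioc 0 L) := hA.diff measurableSet_Ioc
  have hsub1 : ((fun x : ℝ => x + δ) ⁻¹' (A ∩ Ioc δ L)) ⊆ Ioc 0 (L - δ) := by
    intro y hy
    simp only [Set.mem_preimage, Set.mem_inter_iff, Set.mem_Ioc] at hy
    rcases hy.2 with ⟨a, b⟩; exact ⟨by linarith, by linarith⟩
  have hsub2 : ((fun x : ℝ => x + (δ - L)) ⁻¹' (A ∩ Ioc 0 δ)) ⊆ Ioc (L - δ) L := by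
    intro y hy
    simp only [Set.mem_preimage, Set.mem_inter_iff, Set.mem_Ioc] at hy
    rcases hy.2 with ⟨a, b⟩; exact ⟨by linarith, by linarith⟩
  have hd1 : Disjoint ((fun x : ℝ => x + δ) ⁻¹' (A ∩ Ioc δ L))
      (((fun x : ℝ => x + (δ - L)) ⁻¹' (A ∩ Ioc 0 δ)) ∪ (A \ Ioc 0 L)) := by
    refine Set.disjoint_left.mpr fun y hy1 hy2 => ?_
    rcases hsub1 hy1 with ⟨a1, b1⟩
    rcases hy2 with hy2 | hy2
    · rcases hsub2 hy2 with ⟨a2, b2⟩; linarith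
    · exact hy2.2 ⟨a1, by linarith⟩
  have hd2 : Disjoint ((fun x : ℝ => x + (δ - L)) ⁻¹' (A ∩ Ioc 0 δ)) (A \ Ioc 0 L) := by
    refine Set.disjoint_left.mpr fun y hy1 hy2 => ?_
    rcases hsub2 hy1 with ⟨a2, b2⟩
    exact hy2.2 ⟨by linarith, by linarith⟩
  rw [measure_union hd1 (hm2.union hm3), measure_union hd2 hm3, vol_translate, vol_translate]
  have key : volume (A ∩ Ioc δ L) + volume (A ∩ Ioc 0 δ) = volume (A ∩ Ioc 0 L) := by
    rw [← measure_union ?_ (hA.inter measurableSet_Ioc)]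
    · congr 1
      rw [← Set.inter_union_distrib_left]
      congr 1
      rw [Set.union_comm, Set.Ioc_union_Ioc_eq_Ioc] <;> linarith
    · refine (Set.disjoint_left.mpr fun y (hy1 : y ∈ Ioc δ L) (hy2 : y ∈ Ioc 0 δ) => ?_).mono
        Set.inter_subset_right Set.inter_subset_right
      rcases hy1 with ⟨a, b⟩; rcases hy2 with ⟨c, d⟩; linarith
  rw [← add_assoc, key]
  exact MeasureTheory.measure_inter_add_diff A measurableSet_Ioc


section Lift

variable {Φ Ψ : ℝ → ℝ}

/-- Lift a map of `ℝ` preserving `[0,1]` to `UI`. -/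
def uiOf (Φ : ℝ → ℝ) (hiff : ∀ x : ℝ, x ∈ I01 ↔ Φ x ∈ I01) : UI → UI :=
  fun x => ⟨Φ x.val, (hiff x.val).1 x.2⟩

lemma uiOf_val (hiff : ∀ x : ℝ, x ∈ I01 ↔ Φ x ∈ I01) (x : UI) :
    (uiOf Φ hiff x).val = Φ x.val := rfl

lemma measurable_uiOf (hiff : ∀ x : ℝ, x ∈ I01 ↔ Φ x ∈ I01) (hm : Measurable Φ) :
    Measurable (uiOf Φ hiff) :=
  Measurable.subtype_mk (hm.comp measurable_subtype_coe)

lemma mp_uiOf (hiff : ∀ x : ℝ, x ∈ I01 ↔ Φ x ∈ I01) (hm : Measurable Φ)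
    (hmp : MeasurePreserving Φ volume volume) :
    MeasurePreserving (uiOf Φ hiff) lambdaI lambdaI := by
  refine ⟨measurable_uiOf hiff hm, ?_⟩
  refine Measure.ext fun A hA => ?_
  rw [Measure.map_apply (measurable_uiOf hiff hm) hA, lambdaI_apply, lambdaI_apply]
  have himg : Subtype.val '' (uiOf Φ hiff ⁻¹' A) = Φ ⁻¹' (Subtype.val '' A) := by
    ext y
    constructor
    · rintro ⟨x, hx, rfl⟩
      exact ⟨uiOf Φ hiff x, hx, rfl⟩
    · rintro ⟨a, ha, hay⟩
      have hy : y ∈ I01 := (hiff y).2 (by rw [← hay]; exact a.2)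
      refine ⟨⟨y, hy⟩, ?_, rfl⟩
      have : uiOf Φ hiff ⟨y, hy⟩ = a := Subtype.ext (by rw [uiOf_val]; exact hay.symm)
      rw [Set.mem_preimage, this]; exact ha
  rw [himg]
  exact hmp.measure_preimage (me_val.measurableSet_image' hA).nullMeasurableSet

variable (X : RISpace)

lemma rearrX (hiffΦ : ∀ x : ℝ, x ∈ I01 ↔ Φ x ∈ I01) (hiffΨ : ∀ x : ℝ, x ∈ I01 ↔ Ψ x ∈ I01)
    (hmΦ : Measurable Φ) (hmΨ : Measurable Ψ) (hmp : MeasurePreserving Φ volume volume)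
    (h1 : ∀ y, Ψ (Φ y) = y) (h2 : ∀ y, Φ (Ψ y) = y) (f : UI → ℝ) :
    (X.Mem f ↔ X.Mem (f ∘ uiOf Φ hiffΦ)) ∧
      (X.Mem f → X.normF (f ∘ uiOf Φ hiffΦ) = X.normF f) :=
  X.rearr_inv (uiOf Φ hiffΦ) (measurable_uiOf _ hmΦ)
    ⟨uiOf Ψ hiffΨ, measurable_uiOf _ hmΨ, fun t => Subtype.ext (h1 t.val),
      fun t => Subtype.ext (h2 t.val)⟩
    (mp_uiOf _ hmΦ hmp) f

end Lift

section RotUI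

variable {L δ : ℝ}

lemma rot_iff (hδ : 0 < δ) (hδL : δ < L) (hL : L ≤ 1) (x : ℝ) :
    x ∈ I01 ↔ rot L δ x ∈ I01 := by
  by_cases hx : x ∈ Ioc (0:ℝ) L
  · have h2 := rot_mem hx hδ hδL
    rcases hx with ⟨a, b⟩
    rcases h2 with ⟨c, d⟩
    constructor
    · intro _; exact ⟨by linarith, by linarith⟩
    · intro _; exact ⟨by linarith, by linarith⟩
  · rw [rot_out hx hδ hδL]

lemma rot_inv_left (hδ : 0 < δ) (hδL : δ < L) (x : ℝ) :
    rot L (L - δ) (rot L δ x) = x := rot_left_inv hδ hδL x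

lemma rot_inv_right (hδ : 0 < δ) (hδL : δ < L) (x : ℝ) :
    rot L δ (rot L (L - δ) x) = x := by
  have := rot_left_inv (δ := L - δ) (L := L) (by linarith) (by linarith) x
  rwa [sub_sub_cancel] at this

/-- The rotation lifted to `UI`. -/
def uiRot (L δ : ℝ) (hδ : 0 < δ) (hδL : δ < L) (hL : L ≤ 1) : UI → UI :=
  uiOf (rot L δ) (rot_iff hδ hδL hL)

lemma uiRot_val (hδ : 0 < δ) (hδL : δ < L) (hL : L ≤ 1) (x : UI) :
    (uiRot L δ hδ hδL hL x).val = rot L δ x.val := rfl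

lemma measurable_uiRot (hδ : 0 < δ) (hδL : δ < L) (hL : L ≤ 1) :
    Measurable (uiRot L δ hδ hδL hL) :=
  measurable_uiOf _ measurable_rot

lemma mp_uiRot (hδ : 0 < δ) (hδL : δ < L) (hL : L ≤ 1) :
    MeasurePreserving (uiRot L δ hδ hδL hL) lambdaI lambdaI :=
  mp_uiOf _ measurable_rot (measurePreserving_rot hδ hδL)

variable (X : RISpace)

lemma rearr_uiRot (hδ : 0 < δ) (hδL : δ < L) (hL : L ≤ 1) (f : UI → ℝ) :
    (X.Mem f ↔ X.Mem (f ∘ uiRot L δ hδ hδL hL)) ∧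
      (X.Mem f → X.normF (f ∘ uiRot L δ hδ hδL hL) = X.normF f) :=
  rearrX X (rot_iff hδ hδL hL) (rot_iff (by linarith) (by linarith) hL)
    measurable_rot measurable_rot (measurePreserving_rot hδ hδL)
    (rot_inv_left hδ hδL) (rot_inv_right hδ hδL) f

end RotUI

section Dyadic

lemma measurable_val_Ioc {a b : ℝ} : MeasurableSet {t : UI | a < (t:ℝ) ∧ (t:ℝ) ≤ b} :=
  (measurableSet_Ioc (a := a) (b := b)).preimage measurable_subtype_coe

lemma lam_Ioc {a b : ℝ} (h0 : 0 ≤ a) (hb : b ≤ 1) :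
    lambdaI {t : UI | a < (t:ℝ) ∧ (t:ℝ) ≤ b} = ENNReal.ofReal (b - a) := by
  rw [lambdaI_apply]
  have : Subtype.val '' {t : UI | a < (t:ℝ) ∧ (t:ℝ) ≤ b} = Ioc a b := by
    ext y
    constructor
    · rintro ⟨x, hx, rfl⟩; exact hx
    · intro hy
      rcases hy with ⟨c, d⟩
      exact ⟨⟨y, ⟨by linarith, by linarith⟩⟩, ⟨c, d⟩, rfl⟩
  rw [this, Real.volume_Ioc]

lemma e1_eq : dyadE 1 1 = fun x : UI => if (x:ℝ) ∈ Ioc (0:ℝ) (1/2) then (1:ℝ) else 0 := by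
  funext x
  rw [dyadE, Set.indicator_apply]
  norm_num [Set.mem_Ioc]

lemma e2_eq : dyadE 1 2 = fun x : UI => if (x:ℝ) ∈ Ioc (1/2 : ℝ) 1 then (1:ℝ) else 0 := by
  funext x
  rw [dyadE, Set.indicator_apply]
  norm_num [Set.mem_Ioc]

variable (X : RISpace)

lemma mem_dyadE (N i : ℕ) : X.Mem (dyadE N i) :=
  X.indicator_mem _ measurable_val_Ioc (measure_lt_top _ _)

lemma integrable_bdd (g : UI → ℝ) (hm : Measurable g) (C : ℝ) (hC : ∀ x, |g x| ≤ C) :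
    Integrable g lambdaI :=
  (MeasureTheory.integrable_const C).mono' hm.aestronglyMeasurable
    (Filter.Eventually.of_forall fun x => by simpa using hC x)

lemma integrable_mem (f : UI → ℝ) (hf : X.Mem f) : Integrable f lambdaI :=
  MeasureTheory.integrableOn_univ.mp
    (X.integrable_of_mem f hf Set.univ MeasurableSet.univ (measure_lt_top _ _))

lemma int_ind {a b : ℝ} (h0 : 0 ≤ a) (hb : b ≤ 1) (hab : a ≤ b) :
    ∫ x : UI, (if (x:ℝ) ∈ Ioc a b then (1:ℝ) else 0) ∂lambdaI = b - a := by
  have : (fun x : UI => if (x:ℝ) ∈ Ioc a b then (1:ℝ) else 0)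
      = Set.indicator {t : UI | a < (t:ℝ) ∧ (t:ℝ) ≤ b} (1 : UI → ℝ) := by
    funext x
    rw [Set.indicator_apply]
    rfl
  rw [this, MeasureTheory.integral_indicator_one measurable_val_Ioc, measureReal_def, lam_Ioc h0 hb,
    ENNReal.toReal_ofReal (by linarith)]

lemma norm_e1_pos : 0 < X.normF (dyadE 1 1) := by
  rcases lt_or_eq_of_le (X.norm_nonneg' _ (mem_dyadE X 1 1)) with h | h
  · exact h
  exfalso
  have h0 := (X.norm_eq_zero_iff _ (mem_dyadE X 1 1)).1 h.symm
  have : lambdaI {x : UI | dyadE 1 1 x ≠ 0} = 0 := by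
    simpa [Filter.EventuallyEq, MeasureTheory.ae_iff] using h0
  have heq : {x : UI | dyadE 1 1 x ≠ 0} = {t : UI | 0 < (t:ℝ) ∧ (t:ℝ) ≤ 1/2} := by
    ext x
    simp only [e1_eq, Set.mem_setOf_eq, Set.mem_Ioc, ne_eq, ite_eq_right_iff, one_ne_zero]
    tauto
  rw [heq, lam_Ioc le_rfl (by norm_num)] at this
  simp [ENNReal.ofReal_eq_zero] at this

end Dyadic
section XNorm

variable (X : RISpace)

lemma normF_zero : X.normF 0 = 0 := by
  have := X.norm_smul' 0 0 X.zero_mem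
  simpa using this

lemma mem_sum (F : ℕ → UI → ℝ) (s : Finset ℕ) (h : ∀ k, X.Mem (F k)) :
    X.Mem (∑ k ∈ s, F k) := by
  classical
  induction s using Finset.cons_induction with
  | empty => simpa using X.zero_mem
  | cons a s ha ih => rw [Finset.sum_cons]; exact X.add_mem _ _ (h a) ih

lemma norm_sum_le (F : ℕ → UI → ℝ) (s : Finset ℕ) (h : ∀ k, X.Mem (F k)) (c : ℝ)
    (hc : ∀ k, X.normF (F k) ≤ c) :
    X.normF (∑ k ∈ s, F k) ≤ s.card * c := by
  classical
  induction s using Finset.cons_induction with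
  | empty => simp [normF_zero]
  | cons a s ha ih =>
      rw [Finset.sum_cons, Finset.card_cons]
      calc X.normF (F a + ∑ k ∈ s, F k) ≤ X.normF (F a) + X.normF (∑ k ∈ s, F k) :=
            X.norm_add_le _ _ (h a) (mem_sum X F s h)
        _ ≤ c + s.card * c := add_le_add (hc a) ih
        _ = (↑(s.card + 1)) * c := by push_cast; ring

end XNorm

section Averaging

/-- mesh of the dyadic rotation at level `m` -/
def dm (m : ℕ) : ℝ := ((2:ℝ) ^ (m + 1))⁻¹

lemma dm_pos (m : ℕ) : 0 < dm m := by rw [dm]; positivity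

lemma dm_lt (m : ℕ) (hm : 1 ≤ m) : dm m < 1/2 := by
  rw [dm]
  rw [show (1:ℝ)/2 = ((2:ℝ)^1)⁻¹ by norm_num]
  apply inv_strictAnti₀ (by norm_num)
  exact pow_lt_pow_right₀ (by norm_num) (by omega)

lemma dm_mul (m : ℕ) : (2:ℝ)^m * dm m = 1/2 := by
  rw [dm, pow_succ]
  field_simp

/-- Real-side dyadic rotation at level `m`. -/
def Rm (m : ℕ) : ℝ → ℝ := rot (1/2) (dm m)

/-- UI-side dyadic rotation at level `m ≥ 1`. -/
def rhoM (m : ℕ) (hm : 1 ≤ m) : UI → UI :=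
  uiRot (1/2) (dm m) (dm_pos m) (dm_lt m hm) (by norm_num)

/-- its inverse -/
def rhoM' (m : ℕ) (hm : 1 ≤ m) : UI → UI :=
  uiRot (1/2) (1/2 - dm m) (by linarith [dm_lt m hm]) (by linarith [dm_pos m]) (by norm_num)

lemma rhoM_left_inv (m : ℕ) (hm : 1 ≤ m) :
    Function.LeftInverse (rhoM' m hm) (rhoM m hm) := fun x =>
  Subtype.ext (rot_inv_left (dm_pos m) (dm_lt m hm) x.val)

lemma rhoM_right_inv (m : ℕ) (hm : 1 ≤ m) :
    Function.RightInverse (rhoM' m hm) (rhoM m hm) := fun x =>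
  Subtype.ext (rot_inv_right (dm_pos m) (dm_lt m hm) x.val)

lemma rhoM_iter_val (m : ℕ) (hm : 1 ≤ m) (k : ℕ) (x : UI) :
    (((rhoM m hm)^[k]) x).val = ((Rm m)^[k]) x.val := by
  induction k with
  | zero => rfl
  | succ k ih =>
      rw [Function.iterate_succ_apply', Function.iterate_succ_apply']
      rw [← ih]
      rfl

variable (X : RISpace)

lemma rearr_iter (m : ℕ) (hm : 1 ≤ m) (k : ℕ) (f : UI → ℝ) :
    (X.Mem f ↔ X.Mem (f ∘ (rhoM m hm)^[k])) ∧
      (X.Mem f → X.normF (f ∘ (rhoM m hm)^[k]) = X.normF f) :=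
  X.rearr_inv ((rhoM m hm)^[k])
    ((measurable_uiRot (dm_pos m) (dm_lt m hm) (by norm_num)).iterate k)
    ⟨(rhoM' m hm)^[k],
      (measurable_uiRot _ _ _).iterate k,
      (rhoM_left_inv m hm).iterate k, (rhoM_right_inv m hm).iterate k⟩
    ((mp_uiRot (dm_pos m) (dm_lt m hm) (by norm_num)).iterate k) f

/-- The averaging operator on `UI`. -/
def uA (m : ℕ) (hm : 1 ≤ m) (h : UI → ℝ) : UI → ℝ :=
  ((2:ℝ)^m)⁻¹ • ∑ k ∈ Finset.range (2^m), (h ∘ (rhoM m hm)^[k])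

lemma uA_apply (m : ℕ) (hm : 1 ≤ m) (h : UI → ℝ) (x : UI) :
    uA m hm h x = ((2:ℝ)^m)⁻¹ * ∑ k ∈ Finset.range (2^m), h ((rhoM m hm)^[k] x) := by
  rw [uA]
  simp [Finset.sum_apply]

lemma uA_mem (m : ℕ) (hm : 1 ≤ m) (h : UI → ℝ) (hh : X.Mem h) : X.Mem (uA m hm h) :=
  X.smul_mem _ _ (mem_sum X _ _ fun k => ((rearr_iter X m hm k h).1).mp hh)

lemma uA_norm_le (m : ℕ) (hm : 1 ≤ m) (h : UI → ℝ) (hh : X.Mem h) :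
    X.normF (uA m hm h) ≤ X.normF h := by
  rw [uA, X.norm_smul' _ _ (mem_sum X _ _ fun k => ((rearr_iter X m hm k h).1).mp hh)]
  have hb := norm_sum_le X (fun k => h ∘ (rhoM m hm)^[k]) (Finset.range (2^m))
    (fun k => ((rearr_iter X m hm k h).1).mp hh) (X.normF h)
    (fun k => le_of_eq ((rearr_iter X m hm k h).2 hh))
  rw [Finset.card_range] at hb
  calc |((2:ℝ)^m)⁻¹| * X.normF (∑ k ∈ Finset.range (2^m), (h ∘ (rhoM m hm)^[k]))
      ≤ |((2:ℝ)^m)⁻¹| * ((2^m : ℕ) * X.normF h) := by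
        apply mul_le_mul_of_nonneg_left hb (abs_nonneg _)
    _ = X.normF h := by
        rw [abs_of_pos (by positivity)]
        push_cast
        field_simp

/-- The averaging operator on `ℝ`. -/
def rA (m : ℕ) (H : ℝ → ℝ) : ℝ → ℝ :=
  fun y => ((2:ℝ)^m)⁻¹ * ∑ k ∈ Finset.range (2^m), H ((Rm m)^[k] y)

lemma uA_eq_rA (m : ℕ) (hm : 1 ≤ m) (h : UI → ℝ) (H : ℝ → ℝ)
    (hH : ∀ x : UI, h x = H x.val) (x : UI) :
    uA m hm h x = rA m H x.val := by
  rw [uA_apply, rA]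
  congr 1
  refine Finset.sum_congr rfl fun k _ => ?_
  rw [hH, rhoM_iter_val]

end Averaging
section Orbit

lemma orbit_dec (m : ℕ) {y : ℝ} (hy : y ∈ Ioc (0:ℝ) (1/2)) :
    ∃ j : ℕ, j < 2^m ∧ ∃ u : ℝ, u ∈ Ioc 0 (dm m) ∧ y = (j:ℝ) * dm m + u := by
  have hδ := dm_pos m
  have hmul := dm_mul m
  rcases hy with ⟨hy0, hy1⟩
  have hpos : 0 < y / dm m := div_pos hy0 hδ
  have h1 : 1 ≤ ⌈y / dm m⌉₊ := Nat.one_le_ceil_iff.mpr hpos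
  have hle : ⌈y / dm m⌉₊ ≤ 2^m := by
    apply Nat.ceil_le.mpr
    rw [div_le_iff₀ hδ]
    push_cast
    linarith
  refine ⟨⌈y / dm m⌉₊ - 1, by omega,
    y - ((⌈y / dm m⌉₊ - 1 : ℕ) : ℝ) * dm m, ⟨?_, ?_⟩, by ring⟩
  · rw [sub_pos]
    have h2 : (⌈y / dm m⌉₊ : ℝ) < y / dm m + 1 := Nat.ceil_lt_add_one hpos.le
    have h3 : ((⌈y / dm m⌉₊ - 1 : ℕ) : ℝ) < y / dm m := by
      rw [Nat.cast_sub h1]; push_cast; linarith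
    calc ((⌈y / dm m⌉₊ - 1 : ℕ) : ℝ) * dm m < (y / dm m) * dm m :=
          mul_lt_mul_of_pos_right h3 hδ
      _ = y := div_mul_cancel₀ y hδ.ne' 
  · have h4 : y ≤ (⌈y / dm m⌉₊ : ℝ) * dm m := by
      calc y = (y / dm m) * dm m := (div_mul_cancel₀ y hδ.ne').symm
        _ ≤ (⌈y / dm m⌉₊ : ℝ) * dm m :=
            mul_le_mul_of_nonneg_right (Nat.le_ceil _) hδ.le
    rw [Nat.cast_sub h1]
    push_cast
    linarith

lemma Rm_step (m : ℕ) (hm : 1 ≤ m) {j : ℕ} (hj : j < 2^m) {u : ℝ} (hu : u ∈ Ioc 0 (dm m)) :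
    Rm m ((j:ℝ) * dm m + u) = ((((j+1) % 2^m : ℕ)) : ℝ) * dm m + u := by
  have hδ := dm_pos m
  have hmul := dm_mul m
  rcases hu with ⟨hu0, hu1⟩
  by_cases hj2 : j + 1 < 2^m
  · rw [Nat.mod_eq_of_lt hj2]
    have hjr : (j:ℝ) ≤ (2:ℝ)^m - 2 := by
      have hn : j ≤ 2^m - 2 := by omega
      have := Nat.cast_le (α := ℝ) |>.mpr hn
      have h2m : ((2^m - 2 : ℕ) : ℝ) = (2:ℝ)^m - 2 := by
        have : (2:ℕ) ≤ 2^m := by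
          calc (2:ℕ) = 2^1 := rfl
            _ ≤ 2^m := Nat.pow_le_pow_right (by norm_num) hm
        push_cast [Nat.cast_sub this]
        ring
      rw [h2m] at this
      exact this
    have hkey : (j:ℝ) * dm m ≤ ((2:ℝ)^m - 2) * dm m :=
      mul_le_mul_of_nonneg_right hjr hδ.le
    rw [Rm, rot_in1 (by constructor <;> [positivity; linarith])]
    push_cast
    ring
  · have hj1 : j + 1 = 2^m := by omega
    have hjr : (j:ℝ) = (2:ℝ)^m - 1 := by
      have hn : j = 2^m - 1 := by omega
      have h2m : (1:ℕ) ≤ 2^m := Nat.one_le_two_pow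
      rw [hn]
      push_cast [Nat.cast_sub h2m]
      ring
    rw [hj1, Nat.mod_self]
    rw [Rm, rot_in2 ?h1 ?h2]
    case h1 =>
      rw [Set.mem_Ioc]
      push_neg
      intro _
      rw [hjr]; linarith
    case h2 =>
      rw [Set.mem_Ioc]
      rw [hjr]
      constructor <;> linarith
    rw [hjr]
    push_cast
    ring_nf
    linarith [dm_mul m]

lemma Rm_iter (m : ℕ) (hm : 1 ≤ m) (k : ℕ) {j : ℕ} (hj : j < 2^m) {u : ℝ}
    (hu : u ∈ Ioc 0 (dm m)) :
    (Rm m)^[k] ((j:ℝ) * dm m + u) = ((((j + k) % 2^m : ℕ)) : ℝ) * dm m + u := by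
  induction k with
  | zero => simp [Nat.mod_eq_of_lt hj]
  | succ k ih =>
      rw [Function.iterate_succ_apply', ih,
        Rm_step m hm (Nat.mod_lt _ (Nat.two_pow_pos m)) hu]
      congr 3
      rw [Nat.mod_add_mod, ← add_assoc]

lemma Rm_out (m : ℕ) (hm : 1 ≤ m) {y : ℝ} (hy : y ∉ Ioc (0:ℝ) (1/2)) : Rm m y = y :=
  rot_out hy (dm_pos m) (dm_lt m hm)

end Orbit

section StepF

/-- dyadic step function at level `m` with cell values `c j` on `(0,1/2]`, `0` elsewhere. -/
def stepF (m : ℕ) (c : ℕ → ℝ) : ℝ → ℝ :=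
  fun y => ∑ j ∈ Finset.range (2^m),
    Set.indicator (Ioc ((j:ℝ) * dm m) (((j:ℝ)+1) * dm m)) (fun _ => c j) y

lemma cell_subset (m : ℕ) {j : ℕ} (hj : j < 2^m) :
    Ioc ((j:ℝ) * dm m) (((j:ℝ)+1) * dm m) ⊆ Ioc (0:ℝ) (1/2) := by
  intro y hy
  rcases hy with ⟨a, b⟩
  have hδ := dm_pos m
  have hmul := dm_mul m
  have hjn : (j:ℝ) + 1 ≤ (2:ℝ)^m := by
    have : (j:ℕ) + 1 ≤ 2^m := hj
    exact_mod_cast Nat.cast_le (α := ℝ) |>.mpr this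
  have h0 : (0:ℝ) ≤ (j:ℝ) * dm m := by positivity
  have h1 : ((j:ℝ)+1) * dm m ≤ (2:ℝ)^m * dm m :=
    mul_le_mul_of_nonneg_right hjn hδ.le
  exact ⟨by linarith, by linarith⟩

lemma stepF_out (m : ℕ) (c : ℕ → ℝ) {y : ℝ} (hy : y ∉ Ioc (0:ℝ) (1/2)) :
    stepF m c y = 0 := by
  rw [stepF]
  refine Finset.sum_eq_zero fun j hj => ?_
  rw [Set.indicator_of_notMem]
  intro hmem
  exact hy (cell_subset m (Finset.mem_range.mp hj) hmem)

lemma stepF_eval (m : ℕ) (c : ℕ → ℝ) {j : ℕ} (hj : j < 2^m) {u : ℝ}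
    (hu : u ∈ Ioc 0 (dm m)) :
    stepF m c ((j:ℝ) * dm m + u) = c j := by
  have hδ := dm_pos m
  rcases hu with ⟨hu0, hu1⟩
  rw [stepF, Finset.sum_eq_single j]
  · rw [Set.indicator_of_mem (Set.mem_Ioc.mpr ⟨by linarith, by nlinarith⟩)]
  · intro i hi hij
    rw [Set.indicator_of_notMem]
    rw [Set.mem_Ioc]
    push_neg
    intro hlt
    rcases Nat.lt_or_ge i j with h | h
    · have h1 : (i:ℝ) + 1 ≤ (j:ℝ) := by exact_mod_cast h
      have h2 : ((i:ℝ) + 1) * dm m ≤ (j:ℝ) * dm m :=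
        mul_le_mul_of_nonneg_right h1 hδ.le
      linarith
    · exfalso
      have hij' : j < i := lt_of_le_of_ne h (Ne.symm hij)
      have h1 : (j:ℝ) + 1 ≤ (i:ℝ) := by exact_mod_cast hij'
      have h2 : ((j:ℝ) + 1) * dm m ≤ (i:ℝ) * dm m :=
        mul_le_mul_of_nonneg_right h1 hδ.le
      nlinarith
  · intro hj'
    exact absurd (Finset.mem_range.mpr hj) hj'

lemma measurable_stepF (m : ℕ) (c : ℕ → ℝ) : Measurable (stepF m c) :=
  Finset.measurable_sum _ fun i _ => Measurable.indicator measurable_const measurableSet_Ioc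

lemma integrable_stepF (m : ℕ) (c : ℕ → ℝ) : Integrable (stepF m c) volume := by
  apply MeasureTheory.integrable_finset_sum
  intro i hi
  apply MeasureTheory.IntegrableOn.integrable_indicator _ measurableSet_Ioc
  exact (MeasureTheory.integrableOn_const_iff).mpr (Or.inr measure_Ioc_lt_top)

lemma integral_stepF (m : ℕ) (c : ℕ → ℝ) :
    ∫ y, stepF m c y = (∑ j ∈ Finset.range (2^m), c j) * dm m := by
  simp only [stepF]
  rw [MeasureTheory.integral_finset_sum _ (fun i hi => ?_)]
  · rw [Finset.sum_mul]
    refine Finset.sum_congr rfl fun j hj => ?_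
    rw [MeasureTheory.integral_indicator_const _ measurableSet_Ioc, measureReal_def, Real.volume_Ioc,
      smul_eq_mul, mul_comm]
    congr 1
    rw [ENNReal.toReal_ofReal (by ring_nf; linarith [dm_pos m])]
    ring
  · apply MeasureTheory.IntegrableOn.integrable_indicator _ measurableSet_Ioc
    exact (MeasureTheory.integrableOn_const_iff).mpr (Or.inr measure_Ioc_lt_top)

lemma sum_mod_shift (n : ℕ) (hn : 0 < n) (c : ℕ → ℝ) (j : ℕ) :
    ∑ k ∈ Finset.range n, c ((j + k) % n) = ∑ k ∈ Finset.range n, c k := by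
  haveI : NeZero n := ⟨hn.ne'⟩
  rw [← Fin.sum_univ_eq_sum_range (fun k => c ((j + k) % n)) n,
    ← Fin.sum_univ_eq_sum_range c n]
  have key : ∀ k : Fin n, c ((j + (k:ℕ)) % n)
      = (fun i : Fin n => c (i:ℕ)) ((⟨j % n, Nat.mod_lt _ hn⟩ : Fin n) + k) := by
    intro k
    simp only [Fin.add_def]
    rw [Nat.mod_add_mod]
  rw [Fintype.sum_congr _ _ key]
  exact Fintype.sum_equiv (Equiv.addLeft (⟨j % n, Nat.mod_lt _ hn⟩ : Fin n)) _ _ fun k => rfl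

lemma rA_stepF (m : ℕ) (hm : 1 ≤ m) (c : ℕ → ℝ) (y : ℝ) :
    rA m (stepF m c) y = (((2:ℝ)^m)⁻¹ * ∑ j ∈ Finset.range (2^m), c j) *
      (if y ∈ Ioc (0:ℝ) (1/2) then 1 else 0) := by
  by_cases hy : y ∈ Ioc (0:ℝ) (1/2)
  · rw [if_pos hy, mul_one, rA]
    obtain ⟨j, hj, u, hu, rfl⟩ := orbit_dec m hy
    congr 1
    calc ∑ k ∈ Finset.range (2^m), stepF m c ((Rm m)^[k] ((j:ℝ) * dm m + u))
        = ∑ k ∈ Finset.range (2^m), c ((j + k) % 2^m) :=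
          Finset.sum_congr rfl fun k _ => by
            rw [Rm_iter m hm k hj hu,
              stepF_eval m c (Nat.mod_lt _ (Nat.two_pow_pos m)) hu]
      _ = ∑ k ∈ Finset.range (2^m), c k :=
          sum_mod_shift (2^m) (Nat.two_pow_pos m) c j
  · rw [if_neg hy, mul_zero, rA]
    rw [Finset.sum_eq_zero fun k _ => ?_, mul_zero]
    rw [Function.iterate_fixed (Rm_out m hm hy) k]
    exact stepF_out m c hy

end StepF

lemma restrict_eq_glob (W : ℝ → ℝ) (hW : ∀ y, y ∉ Ioc (0:ℝ) (1/2) → W y = 0) :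
    ∫ y in I01, W y = ∫ y, W y := by
  rw [← MeasureTheory.integral_indicator measurableSet_Icc]
  congr 1
  funext y
  rw [Set.indicator_apply]
  by_cases hy : y ∈ I01
  · rw [if_pos hy]
  · rw [if_neg hy, hW y fun hc => hy ⟨le_of_lt hc.1, le_trans hc.2 (by norm_num)⟩]
section Approx

/-- the rotation as a measurable equivalence -/
def Req (m : ℕ) (hm : 1 ≤ m) : ℝ ≃ᵐ ℝ where
  toEquiv := ⟨Rm m, rot (1/2) (1/2 - dm m),
    rot_inv_left (dm_pos m) (dm_lt m hm), rot_inv_right (dm_pos m) (dm_lt m hm)⟩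
  measurable_toFun := measurable_rot
  measurable_invFun := measurable_rot

lemma me_Rm_iter (m : ℕ) (hm : 1 ≤ m) (k : ℕ) : MeasurableEmbedding ((Rm m)^[k]) := by
  induction k with
  | zero => exact MeasurableEmbedding.id
  | succ k ih =>
      rw [Function.iterate_succ]
      exact ih.comp (Req m hm).measurableEmbedding

lemma integral_comp_Rm_iter (m : ℕ) (hm : 1 ≤ m) (k : ℕ) (u : ℝ → ℝ) :
    ∫ y, u ((Rm m)^[k] y) = ∫ y, u y :=
  ((measurePreserving_rot (dm_pos m) (dm_lt m hm)).iterate k).integral_comp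
    (me_Rm_iter m hm k) u

lemma integrable_of_bdd_supp (H : ℝ → ℝ) (hm : Measurable H) (C : ℝ)
    (hb : ∀ y, |H y| ≤ C) (hs : ∀ y, y ∉ Ioc (0:ℝ) (1/2) → H y = 0) :
    Integrable H volume := by
  have heq : H = Set.indicator (Ioc (0:ℝ) (1/2)) H := by
    funext y
    rw [Set.indicator_apply]
    by_cases hy : y ∈ Ioc (0:ℝ) (1/2)
    · rw [if_pos hy]
    · rw [if_neg hy, hs y hy]
  rw [heq]
  apply MeasureTheory.IntegrableOn.integrable_indicator _ measurableSet_Ioc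
  refine Integrable.mono' (MeasureTheory.integrable_const C) hm.aestronglyMeasurable ?_
  exact MeasureTheory.ae_of_all _ fun y => by simpa using hb y

lemma Rm_iter_out (m : ℕ) (hm : 1 ≤ m) (k : ℕ) {y : ℝ} (hy : y ∉ Ioc (0:ℝ) (1/2)) :
    (Rm m)^[k] y = y :=
  Function.iterate_fixed (Rm_out m hm hy) k

lemma rA_meas (m : ℕ) (H : ℝ → ℝ) (hm : Measurable H) : Measurable (rA m H) := by
  apply Measurable.const_mul
  exact Finset.measurable_sum _ fun k _ => hm.comp (measurable_rot.iterate k)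

lemma rA_supp (m : ℕ) (hm : 1 ≤ m) (H : ℝ → ℝ)
    (hs : ∀ y, y ∉ Ioc (0:ℝ) (1/2) → H y = 0) :
    ∀ y, y ∉ Ioc (0:ℝ) (1/2) → rA m H y = 0 := by
  intro y hy
  rw [rA, Finset.sum_eq_zero fun k _ => by rw [Rm_iter_out m hm k hy]; exact hs y hy,
    mul_zero]

lemma rA_bdd (m : ℕ) (H : ℝ → ℝ) (C : ℝ) (hb : ∀ y, |H y| ≤ C) :
    ∀ y, |rA m H y| ≤ C := by
  intro y
  have hC : 0 ≤ C := le_trans (abs_nonneg _) (hb y)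
  rw [rA, abs_mul, abs_of_pos (show (0:ℝ) < ((2:ℝ)^m)⁻¹ by positivity)]
  calc ((2:ℝ)^m)⁻¹ * |∑ k ∈ Finset.range (2^m), H ((Rm m)^[k] y)|
      ≤ ((2:ℝ)^m)⁻¹ * ∑ k ∈ Finset.range (2^m), C := by
        apply mul_le_mul_of_nonneg_left _ (by positivity)
        exact le_trans (Finset.abs_sum_le_sum_abs _ _)
          (Finset.sum_le_sum fun k _ => hb _)
    _ = C := by
        rw [Finset.sum_const, Finset.card_range, nsmul_eq_mul]
        push_cast
        field_simp

lemma rA_nonneg (m : ℕ) (H : ℝ → ℝ) (h0 : ∀ y, 0 ≤ H y) : ∀ y, 0 ≤ rA m H y := by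
  intro y
  rw [rA]
  have : (0:ℝ) ≤ ∑ k ∈ Finset.range (2^m), H ((Rm m)^[k] y) :=
    Finset.sum_nonneg fun k _ => h0 _
  positivity

lemma rA_sub (m : ℕ) (H G : ℝ → ℝ) (y : ℝ) :
    rA m H y - rA m G y = rA m (H - G) y := by
  simp only [rA, Pi.sub_apply]
  rw [Finset.sum_sub_distrib]
  ring

lemma rA_contract (m : ℕ) (hm : 1 ≤ m) (u : ℝ → ℝ) (hmeas : Measurable u) (C : ℝ)
    (hb : ∀ y, |u y| ≤ C) (hs : ∀ y, y ∉ Ioc (0:ℝ) (1/2) → u y = 0) :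
    ∫ y, |rA m u y| ≤ ∫ y, |u y| := by
  have hint : ∀ k : ℕ, Integrable (fun y => |u ((Rm m)^[k] y)|) volume := by
    intro k
    refine (integrable_of_bdd_supp (fun y => u ((Rm m)^[k] y))
      (hmeas.comp (measurable_rot.iterate k)) C (fun y => hb _) ?_).abs
    intro y hy
    show u ((Rm m)^[k] y) = 0
    rw [Rm_iter_out m hm k hy]
    exact hs y hy
  have h1 : ∀ y, |rA m u y| ≤
      ((2:ℝ)^m)⁻¹ * ∑ k ∈ Finset.range (2^m), |u ((Rm m)^[k] y)| := by
    intro y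
    rw [rA, abs_mul, abs_of_pos (show (0:ℝ) < ((2:ℝ)^m)⁻¹ by positivity)]
    exact mul_le_mul_of_nonneg_left (Finset.abs_sum_le_sum_abs _ _) (by positivity)
  calc ∫ y, |rA m u y|
      ≤ ∫ y, ((2:ℝ)^m)⁻¹ * ∑ k ∈ Finset.range (2^m), |u ((Rm m)^[k] y)| := by
        refine MeasureTheory.integral_mono ?_ ?_ h1
        · refine (integrable_of_bdd_supp (rA m u) (rA_meas m u hmeas) C
            (rA_bdd m u C hb) (rA_supp m hm u hs)).abs
        · exact (MeasureTheory.integrable_finset_sum _ fun k _ => hint k).const_mul _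
    _ = ((2:ℝ)^m)⁻¹ * ∑ k ∈ Finset.range (2^m), ∫ y, |u ((Rm m)^[k] y)| := by
        rw [MeasureTheory.integral_const_mul,
          MeasureTheory.integral_finset_sum _ fun k _ => hint k]
    _ = ((2:ℝ)^m)⁻¹ * ∑ k ∈ Finset.range (2^m), ∫ y, |u y| := by
        congr 1
        exact Finset.sum_congr rfl fun k _ => integral_comp_Rm_iter m hm k (fun z => |u z|)
    _ = ∫ y, |u y| := by
        rw [Finset.sum_const, Finset.card_range, nsmul_eq_mul]
        push_cast
        field_simp

/-- Key approximation: the dyadic averages converge to the mean in `L¹`. -/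
lemma approx (H : ℝ → ℝ) (hHm : Measurable H) (M : ℝ) (hH0 : ∀ y, 0 ≤ H y)
    (hHM : ∀ y, H y ≤ M) (hs : ∀ y, y ∉ Ioc (0:ℝ) (1/2) → H y = 0) {ε : ℝ} (hε : 0 < ε) :
    ∃ m, 1 ≤ m ∧ ∫ y, |rA m H y -
      (2 * ∫ z, H z) * (if y ∈ Ioc (0:ℝ) (1/2) then 1 else 0)| ≤ ε := by
  have hHb : ∀ y, |H y| ≤ M := fun y => by
    rw [abs_of_nonneg (hH0 y)]; exact hHM y
  have HI : Integrable H volume := integrable_of_bdd_supp H hHm M hHb hs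
  obtain ⟨gc, hgc_supp, hgc_l1, hgc_cont, hgc_int⟩ :=
    HI.exists_hasCompactSupport_integral_sub_le (show (0:ℝ) < ε/4 by linarith)
  have hUC := (isCompact_Icc (a := (-1:ℝ)) (b := 2)).uniformContinuousOn_of_continuous
    hgc_cont.continuousOn
  obtain ⟨δ₀, hδ₀, hUC2⟩ := Metric.uniformContinuousOn_iff.mp hUC (ε/2) (by linarith)
  obtain ⟨m0, hm0⟩ := exists_pow_lt_of_lt_one hδ₀ (show (1/2:ℝ) < 1 by norm_num)
  set m := m0 + 1 with hmdef
  have hm : 1 ≤ m := by omega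
  have hdm : dm m < δ₀ := by
    have h1 : dm m ≤ (1/2:ℝ)^m0 := by
      rw [dm, one_div, inv_pow]
      apply inv_anti₀ (by positivity)
      apply pow_le_pow_right₀ (by norm_num)
      omega
    linarith
  have hδ := dm_pos m
  have hmul := dm_mul m
  set cfn : ℕ → ℝ := fun j => gc ((j:ℝ) * dm m + dm m) with hcfn
  set G := stepF m cfn with hG
  set gcI := Set.indicator (Ioc (0:ℝ) (1/2)) gc with hgcI
  -- integrability facts
  have hgcI_int : Integrable gcI volume := hgc_int.indicator measurableSet_Ioc
  have hG_int : Integrable G volume := integrable_stepF m cfn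
  have hCG : ∀ y, |G y| ≤ ∑ j ∈ Finset.range (2^m), |cfn j| := by
    intro y
    rw [hG, stepF]
    refine le_trans (Finset.abs_sum_le_sum_abs _ _) (Finset.sum_le_sum fun j hj => ?_)
    rw [Set.indicator_apply]
    split_ifs
    · exact le_rfl
    · simp [abs_nonneg]
  -- |H - G| estimate
  have hHgcI : ∫ y, |H y - gcI y| ≤ ε/4 := by
    refine le_trans (MeasureTheory.integral_mono ((HI.sub hgcI_int).abs) (HI.sub hgc_int).norm
      fun y => ?_) hgc_l1
    by_cases hy : y ∈ Ioc (0:ℝ) (1/2)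
    · rw [hgcI, Set.indicator_of_mem hy]
      simp [Real.norm_eq_abs]
    · rw [hgcI, Set.indicator_of_notMem hy, hs y hy]
      simp [Real.norm_eq_abs, abs_nonneg]
  have hgcIG : ∫ y, |gcI y - G y| ≤ (ε/2) * (1/2) := by
    have hpt : ∀ y, |gcI y - G y| ≤
        (ε/2) * Set.indicator (Ioc (0:ℝ) (1/2)) (fun _ => (1:ℝ)) y := by
      intro y
      by_cases hy : y ∈ Ioc (0:ℝ) (1/2)
      · rw [Set.indicator_of_mem hy, mul_one, hgcI, Set.indicator_of_mem hy]
        obtain ⟨j, hj, u, hu, rfl⟩ := orbit_dec m hy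
        rw [hG, stepF_eval m cfn hj hu, hcfn]
        have hj1 : ((j:ℝ) + 1) * dm m ≤ (2:ℝ)^m * dm m := by
          apply mul_le_mul_of_nonneg_right _ hδ.le
          have : (j:ℕ) + 1 ≤ 2^m := hj
          exact_mod_cast this
        rcases hu with ⟨hu0, hu1⟩
        rcases hy with ⟨hy0, hy1⟩
        have hj0 : (0:ℝ) ≤ (j:ℝ) * dm m := by positivity
        have hmem1 : (j:ℝ) * dm m + u ∈ Icc (-1:ℝ) 2 := ⟨by linarith, by linarith⟩
        have hmem2 : (j:ℝ) * dm m + dm m ∈ Icc (-1:ℝ) 2 := by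
          constructor
          · nlinarith
          · nlinarith
        have hdist : dist ((j:ℝ) * dm m + u) ((j:ℝ) * dm m + dm m) < δ₀ := by
          rw [Real.dist_eq]
          rw [abs_of_nonpos (by linarith)]
          linarith
        have h5 := hUC2 _ hmem1 _ hmem2 hdist
        rw [Real.dist_eq] at h5
        exact le_of_lt h5
      · rw [Set.indicator_of_notMem hy, mul_zero, hgcI, Set.indicator_of_notMem hy,
          hG, stepF_out m cfn hy]
        simp
    calc ∫ y, |gcI y - G y|
        ≤ ∫ y, (ε/2) * Set.indicator (Ioc (0:ℝ) (1/2)) (fun _ => (1:ℝ)) y := by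
          refine MeasureTheory.integral_mono ((hgcI_int.sub hG_int).abs) ?_ hpt
          exact (((MeasureTheory.integrableOn_const_iff).mpr
            (Or.inr measure_Ioc_lt_top)).integrable_indicator measurableSet_Ioc).const_mul _
      _ = (ε/2) * (1/2) := by
          rw [MeasureTheory.integral_const_mul]
          congr 1
          have : ∫ y, Set.indicator (Ioc (0:ℝ) (1/2)) (fun _ => (1:ℝ)) y
              = ∫ y, Set.indicator (Ioc (0:ℝ) (1/2)) (1 : ℝ → ℝ) y := by
            congr 1
          rw [this, MeasureTheory.integral_indicator_one measurableSet_Ioc, measureReal_def, Real.volume_Ioc]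
          norm_num
  have hHG : ∫ y, |H y - G y| ≤ ε/2 := by
    have hpt : ∀ y, |H y - G y| ≤ |H y - gcI y| + |gcI y - G y| := fun y => by
      calc |H y - G y| = |(H y - gcI y) + (gcI y - G y)| := by ring_nf
        _ ≤ |H y - gcI y| + |gcI y - G y| := abs_add_le _ _
    calc ∫ y, |H y - G y|
        ≤ ∫ y, (|H y - gcI y| + |gcI y - G y|) := by
          refine MeasureTheory.integral_mono ((HI.sub hG_int).abs) ?_ hpt
          exact ((HI.sub hgcI_int).abs).add ((hgcI_int.sub hG_int).abs)
      _ = (∫ y, |H y - gcI y|) + ∫ y, |gcI y - G y| :=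
          MeasureTheory.integral_add ((HI.sub hgcI_int).abs) ((hgcI_int.sub hG_int).abs)
      _ ≤ ε/4 + (ε/2) * (1/2) := add_le_add hHgcI hgcIG
      _ = ε/2 := by ring
  -- the step function support etc.
  have hGsupp : ∀ y, y ∉ Ioc (0:ℝ) (1/2) → G y = 0 := fun y hy => stepF_out m cfn hy
  have hHGsupp : ∀ y, y ∉ Ioc (0:ℝ) (1/2) → (H - G) y = 0 := fun y hy => by
    simp [hs y hy, hGsupp y hy]
  have hHGmeas : Measurable (H - G) := hHm.sub (measurable_stepF m cfn)
  have hHGbdd : ∀ y, |(H - G) y| ≤ M + ∑ j ∈ Finset.range (2^m), |cfn j| := fun y => by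
    simp only [Pi.sub_apply]
    calc |H y - G y| ≤ |H y| + |G y| := abs_sub _ _
      _ ≤ M + ∑ j ∈ Finset.range (2^m), |cfn j| := add_le_add (hHb y) (hCG y)
  -- c̄ and c
  set cbar := ((2:ℝ)^m)⁻¹ * ∑ j ∈ Finset.range (2^m), cfn j with hcbar
  set c := 2 * ∫ z, H z with hc
  have hcbarG : cbar = 2 * ∫ z, G z := by
    rw [hG, integral_stepF m cfn, hcbar, dm, pow_succ]
    have h2 : ((2:ℝ)^m) ≠ 0 := by positivity
    field_simp
    ring
  have hccbar : |cbar - c| ≤ 2 * ∫ y, |H y - G y| := by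
    rw [hcbarG, hc]
    rw [show 2 * (∫ z, G z) - 2 * ∫ z, H z = 2 * ((∫ z, G z) - ∫ z, H z) by ring]
    rw [abs_mul, abs_of_pos (by norm_num : (0:ℝ) < 2)]
    apply mul_le_mul_of_nonneg_left _ (by norm_num)
    rw [← MeasureTheory.integral_sub hG_int HI]
    calc |∫ z, (G z - H z)| ≤ ∫ z, |G z - H z| := by
          simpa [Real.norm_eq_abs] using
            MeasureTheory.norm_integral_le_integral_norm (fun z => G z - H z)
      _ = ∫ z, |H z - G z| := by
          congr 1
          funext z
          rw [abs_sub_comm]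
  -- final estimate
  refine ⟨m, hm, ?_⟩
  have hrAG : ∀ y, rA m G y = cbar * (if y ∈ Ioc (0:ℝ) (1/2) then 1 else 0) := fun y => by
    rw [hG, rA_stepF m hm cfn y, hcbar]
  have hpt : ∀ y, |rA m H y - c * (if y ∈ Ioc (0:ℝ) (1/2) then 1 else 0)|
      ≤ |rA m (H - G) y| + |cbar - c| * Set.indicator (Ioc (0:ℝ) (1/2)) (fun _ => (1:ℝ)) y := by
    intro y
    have heq : rA m H y - c * (if y ∈ Ioc (0:ℝ) (1/2) then 1 else 0)
        = rA m (H - G) y + (cbar - c) * (if y ∈ Ioc (0:ℝ) (1/2) then 1 else 0) := by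
      rw [← rA_sub, hrAG y]; ring
    rw [heq]
    calc |rA m (H - G) y + (cbar - c) * (if y ∈ Ioc (0:ℝ) (1/2) then 1 else 0)|
        ≤ |rA m (H - G) y| + |(cbar - c) * (if y ∈ Ioc (0:ℝ) (1/2) then 1 else 0)| :=
          abs_add_le _ _
      _ = |rA m (H - G) y| + |cbar - c| *
            Set.indicator (Ioc (0:ℝ) (1/2)) (fun _ => (1:ℝ)) y := by
          rw [abs_mul, Set.indicator_apply]
          split_ifs <;> simp
  -- integrability
  have hrAH_int : Integrable (rA m H) volume :=
    integrable_of_bdd_supp (rA m H) (rA_meas m H hHm) M (rA_bdd m H M hHb) (rA_supp m hm H hs)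
  have hind_int : Integrable (fun y => c * (if y ∈ Ioc (0:ℝ) (1/2) then (1:ℝ) else 0)) volume := by
    have : (fun y => c * (if y ∈ Ioc (0:ℝ) (1/2) then (1:ℝ) else 0))
        = fun y => Set.indicator (Ioc (0:ℝ) (1/2)) (fun _ => c) y := by
      funext y
      rw [Set.indicator_apply]
      split_ifs <;> simp
    rw [this]
    exact ((MeasureTheory.integrableOn_const_iff).mpr
      (Or.inr measure_Ioc_lt_top)).integrable_indicator measurableSet_Ioc
  have hind1_int : Integrable (fun y => Set.indicator (Ioc (0:ℝ) (1/2)) (fun _ => (1:ℝ)) y) volume := by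
    exact ((MeasureTheory.integrableOn_const_iff).mpr
      (Or.inr measure_Ioc_lt_top)).integrable_indicator measurableSet_Ioc
  have hrAHG_int : Integrable (rA m (H - G)) volume :=
    integrable_of_bdd_supp (rA m (H - G)) (rA_meas m (H - G) hHGmeas) _
      (rA_bdd m (H - G) _ hHGbdd) (rA_supp m hm (H - G) hHGsupp)
  have habs_eq : ∀ y : ℝ, |(H - G) y| = |H y - G y| := fun y => rfl
  have hHGabs_int : Integrable (fun y => |H y - G y|) volume := by
    have := ((HI.sub hG_int).abs)
    exact this
  calc ∫ y, |rA m H y - c * (if y ∈ Ioc (0:ℝ) (1/2) then 1 else 0)|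
      ≤ ∫ y, (|rA m (H - G) y| + |cbar - c| *
          Set.indicator (Ioc (0:ℝ) (1/2)) (fun _ => (1:ℝ)) y) := by
        refine MeasureTheory.integral_mono ((hrAH_int.sub hind_int).abs) ?_ hpt
        exact (hrAHG_int.abs).add (hind1_int.const_mul _)
    _ = (∫ y, |rA m (H - G) y|) + |cbar - c| * (1/2) := by
        rw [MeasureTheory.integral_add (hrAHG_int.abs) (hind1_int.const_mul _),
          MeasureTheory.integral_const_mul]
        congr 1
        have h9 : ∫ y, Set.indicator (Ioc (0:ℝ) (1/2)) (fun _ => (1:ℝ)) y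
            = ∫ y, Set.indicator (Ioc (0:ℝ) (1/2)) (1 : ℝ → ℝ) y := by congr 1
        rw [h9, MeasureTheory.integral_indicator_one measurableSet_Ioc, measureReal_def, Real.volume_Ioc]
        norm_num
    _ ≤ (∫ y, |H y - G y|) + (2 * ∫ y, |H y - G y|) * (1/2) := by
        refine add_le_add ?_ (mul_le_mul_of_nonneg_right hccbar (by norm_num))
        have h8 := rA_contract m hm (H - G) hHGmeas _ hHGbdd hHGsupp
        calc ∫ y, |rA m (H - G) y| ≤ ∫ y, |(H - G) y| := h8
          _ = ∫ y, |H y - G y| := by simp only [Pi.sub_apply]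
    _ = 2 * ∫ y, |H y - G y| := by ring
    _ ≤ 2 * (ε/2) := by linarith [hHG]
    _ = ε := by ring

end Approx
section Core

def ind1 : ℝ → ℝ := fun y => if y ∈ Ioc (0:ℝ) (1/2) then 1 else 0

lemma e1_val (x : UI) : dyadE 1 1 x = ind1 x.val := by
  rw [e1_eq]; rfl

lemma measurable_dyadE (N i : ℕ) : Measurable (dyadE N i) :=
  Measurable.indicator measurable_const measurable_val_Ioc

variable (X : RISpace)

lemma core (H : ℝ → ℝ) (M : ℝ) (hHm : Measurable H) (hH0 : ∀ y, 0 ≤ H y)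
    (hHM : ∀ y, H y ≤ M) (hs : ∀ y, y ∉ Ioc (0:ℝ) (1/2) → H y = 0)
    (hmem : X.Mem (fun x : UI => H x.val)) :
    2 * (∫ y, H y) * X.normF (dyadE 1 1) ≤ X.normF (fun x : UI => H x.val) := by
  have hM0 : 0 ≤ M := le_trans (hH0 0) (hHM 0)
  set h : UI → ℝ := fun x => H x.val with hh
  set c : ℝ := 2 * ∫ y, H y with hc
  have hintH : 0 ≤ ∫ y, H y := MeasureTheory.integral_nonneg hH0
  have hc0 : 0 ≤ c := by rw [hc]; linarith
  set g : UI → ℝ := c • dyadE 1 1 with hg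
  have hgMem : X.Mem g := X.smul_mem c _ (mem_dyadE X 1 1)
  have hgmeas : Measurable g := (measurable_dyadE 1 1).const_smul c
  have hgval : ∀ x : UI, g x = c * ind1 x.val := by
    intro x
    rw [hg, Pi.smul_apply, smul_eq_mul, e1_val]
  -- choose the approximating levels
  have hex : ∀ i : ℕ, ∃ m, 1 ≤ m ∧
      ∫ y, |rA m H y - c * ind1 y| ≤ 1/((i:ℝ)+1) := by
    intro i
    obtain ⟨m, hm, hle⟩ := approx H hHm M hH0 hHM hs
      (show (0:ℝ) < 1/((i:ℝ)+1) by positivity)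
    exact ⟨m, hm, hle⟩
  choose ms hms1 hms2 using hex
  set u : ℕ → UI → ℝ := fun i => uA (ms i) (hms1 i) h with hu
  have huH : ∀ i (x : UI), u i x = rA (ms i) H x.val := fun i x =>
    uA_eq_rA _ _ h H (fun _ => rfl) x
  have humem : ∀ i, X.Mem (u i) := fun i => uA_mem X _ _ h hmem
  have hunorm : ∀ i, X.normF (u i) ≤ X.normF h := fun i => uA_norm_le X _ _ h hmem
  have hu0 : ∀ i (x : UI), 0 ≤ u i x := by
    intro i x; rw [huH]; exact rA_nonneg _ H hH0 _
  have humeas : ∀ i, Measurable (u i) := by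
    intro i
    have : u i = fun x => rA (ms i) H x.val := funext (huH i)
    rw [this]
    exact (rA_meas _ H hHm).comp measurable_subtype_coe
  have hubdd : ∀ i (x : UI), |u i x| ≤ M := by
    intro i x
    rw [huH]
    exact rA_bdd _ H M (fun y => by rw [abs_of_nonneg (hH0 y)]; exact hHM y) _
  -- L¹ control on UI
  have hL1 : ∀ i, ∫ x : UI, |u i x - g x| ∂lambdaI ≤ 1/((i:ℝ)+1) := by
    intro i
    have hWsupp : ∀ y, y ∉ Ioc (0:ℝ) (1/2) → |rA (ms i) H y - c * ind1 y| = 0 := by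
      intro y hy
      rw [rA_supp _ (hms1 i) H hs y hy, ind1, if_neg hy]
      simp
    have heq : (fun x : UI => |u i x - g x|)
        = fun x : UI => |rA (ms i) H x.val - c * ind1 x.val| := by
      funext x
      rw [huH, hgval]
    rw [heq]
    rw [integral_UI (fun y => |rA (ms i) H y - c * ind1 y|),
      restrict_eq_glob _ hWsupp]
    exact hms2 i
  -- integrability of u i - g on lambdaI
  have hgbdd : ∀ x : UI, |g x| ≤ c := by
    intro x
    rw [hgval, ind1, abs_mul, abs_of_nonneg hc0]
    split_ifs <;> simp [abs_of_nonneg hc0, hc0]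
  have hug_int : ∀ i, Integrable (fun x : UI => u i x - g x) lambdaI := by
    intro i
    apply integrable_bdd _ ((humeas i).sub hgmeas) (M + c)
    intro x
    calc |u i x - g x| ≤ |u i x| + |g x| := abs_sub _ _
      _ ≤ M + c := add_le_add (hubdd i x) (hgbdd x)
  -- convergence in measure
  have hTIM : MeasureTheory.TendstoInMeasure lambdaI u atTop g := by
    apply MeasureTheory.tendstoInMeasure_of_tendsto_eLpNorm (p := 1) one_ne_zero
      (fun i => (humeas i).aestronglyMeasurable) hgmeas.aestronglyMeasurable
    have heq : ∀ i, MeasureTheory.eLpNorm (u i - g) 1 lambdaI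
        = ENNReal.ofReal (∫ x : UI, |u i x - g x| ∂lambdaI) := by
      intro i
      rw [MeasureTheory.eLpNorm_one_eq_lintegral_enorm,
        ← MeasureTheory.ofReal_integral_norm_eq_lintegral_enorm
          (show Integrable (u i - g) lambdaI from hug_int i)]
      simp only [Pi.sub_apply, Real.norm_eq_abs]
    have htop : Tendsto (fun i : ℕ => ENNReal.ofReal (1/((i:ℝ)+1))) atTop (nhds 0) := by
      have := ENNReal.tendsto_ofReal (tendsto_one_div_add_atTop_nhds_zero_nat)
      rwa [ENNReal.ofReal_zero] at this
    refine tendsto_of_tendsto_of_tendsto_of_le_of_le tendsto_const_nhds htop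
      (fun i => zero_le) (fun i => ?_)
    rw [heq i]
    exact ENNReal.ofReal_le_ofReal (hL1 i)
  obtain ⟨ns, _, hae⟩ := hTIM.exists_seq_tendsto_ae
  -- monotone minorants
  set v : ℕ → UI → ℝ := fun k x => ⨅ j : ℕ, u (ns (k + j)) x with hv
  have hbddb : ∀ k (x : UI), BddBelow (Set.range fun j => u (ns (k + j)) x) :=
    fun k x => ⟨0, fun r ⟨j, hj⟩ => hj ▸ hu0 _ x⟩
  have hvmeas : ∀ k, Measurable (v k) := fun k => Measurable.iInf fun j => humeas _
  have hv0 : ∀ k (x : UI), 0 ≤ v k x := fun k x => le_ciInf fun j => hu0 _ x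
  have hvle : ∀ k (x : UI), v k x ≤ u (ns k) x := by
    intro k x
    have := ciInf_le (hbddb k x) 0
    simpa using this
  have hvmono : ∀ x : UI, Monotone fun k => v k x := by
    intro x
    apply monotone_nat_of_le_succ
    intro k
    apply le_ciInf
    intro j
    have h1 := ciInf_le (hbddb k x) (j + 1)
    have h2 : k + (j + 1) = (k + 1) + j := by ring
    rwa [h2] at h1
  have hvabs : ∀ k, ∀ᵐ x ∂lambdaI, |v k x| ≤ |u (ns k) x| :=
    fun k => MeasureTheory.ae_of_all _ fun x => by
      rw [abs_of_nonneg (hv0 k x), abs_of_nonneg (hu0 _ x)]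
      exact hvle k x
  have hvmem : ∀ k, X.Mem (v k) := fun k =>
    X.mem_of_le (v k) (u (ns k)) (hvmeas k) (humem _) (hvabs k)
  have hvnorm : ∀ k, X.normF (v k) ≤ X.normF h := fun k =>
    le_trans (X.norm_mono _ _ (hvmem k) (humem _) (hvabs k)) (hunorm _)
  have hvtend : ∀ᵐ x ∂lambdaI, Tendsto (fun k => v k x) atTop (nhds (g x)) := by
    filter_upwards [hae] with x hx
    rw [Metric.tendsto_atTop] at hx ⊢
    intro ε hε
    obtain ⟨N, hN⟩ := hx (ε/2) (by linarith)
    refine ⟨N, fun k hk => ?_⟩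
    have hub : v k x ≤ u (ns k) x := hvle k x
    have hlb : g x - ε/2 ≤ v k x := by
      apply le_ciInf
      intro j
      have h3 := hN (k + j) (by omega)
      rw [Real.dist_eq] at h3
      have h4 := abs_lt.mp h3
      linarith [h4.1]
    have h5 := hN k hk
    rw [Real.dist_eq] at h5 ⊢
    have h6 := abs_lt.mp h5
    rw [abs_lt]
    constructor <;> linarith [h6.1, h6.2]
  -- the two cases
  have key : X.normF g ≤ X.normF h := by
    rcases X.oc_or_fatou with hOC | hFatou
    · set w : ℕ → UI → ℝ := fun k => g - v k with hw
      have hwmem : ∀ k, X.Mem (w k) := by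
        intro k
        have heq2 : w k = g + (-1 : ℝ) • v k := by
          funext x
          simp [hw, sub_eq_add_neg]
        rw [heq2]
        exact X.add_mem _ _ hgMem (X.smul_mem _ _ (hvmem k))
      have hOCae : ∀ᵐ x ∂lambdaI, Antitone (fun n => w n x) ∧
          Tendsto (fun n => w n x) atTop (nhds 0) := by
        filter_upwards [hvtend] with x hx
        constructor
        · intro a b hab
          have := hvmono x hab
          simp only [hw, Pi.sub_apply]
          linarith
        · have h7 := Tendsto.const_sub (g x) hx
          simp only [hw, Pi.sub_apply]
          simpa using h7
      have hOC2 := hOC w hwmem hOCae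
      have hsplit : ∀ k, X.normF g ≤ X.normF h + X.normF (w k) := by
        intro k
        have heq3 : g = v k + w k := by
          funext x
          simp [hw]
        calc X.normF g = X.normF (v k + w k) := by rw [← heq3]
          _ ≤ X.normF (v k) + X.normF (w k) := X.norm_add_le _ _ (hvmem k) (hwmem k)
          _ ≤ X.normF h + X.normF (w k) := by linarith [hvnorm k]
      have hlim : Tendsto (fun k => X.normF h + X.normF (w k)) atTop
          (nhds (X.normF h + 0)) := tendsto_const_nhds.add hOC2
      rw [add_zero] at hlim
      exact ge_of_tendsto' hlim hsplit
    · have hFae : ∀ᵐ x ∂lambdaI, Monotone (fun n => v n x) ∧ 0 ≤ v 0 x ∧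
          Tendsto (fun n => v n x) atTop (nhds (g x)) := by
        filter_upwards [hvtend] with x hx
        exact ⟨hvmono x, hv0 0 x, hx⟩
      have hFbdd : BddAbove (Set.range fun n => X.normF (v n)) :=
        ⟨X.normF h, fun r ⟨k, hk⟩ => hk ▸ hvnorm k⟩
      have hF := hFatou v g hvmem hgmeas hFae hFbdd
      rw [hF.2]
      exact ciSup_le fun k => hvnorm k
  have hfinal : X.normF g = c * X.normF (dyadE 1 1) := by
    rw [hg, X.norm_smul' c _ (mem_dyadE X 1 1), abs_of_nonneg hc0]
  calc 2 * (∫ y, H y) * X.normF (dyadE 1 1) = X.normF g := by rw [hfinal, hc]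
    _ ≤ X.normF h := key

end Core
section LemA

def projc (y : ℝ) : UI :=
  ⟨min 1 (max 0 y), ⟨le_min (by norm_num) (le_max_left 0 y), min_le_left 1 (max 0 y)⟩⟩

lemma projc_val (x : UI) : projc x.val = x := by
  apply Subtype.ext
  show min 1 (max 0 x.val) = x.val
  rw [max_eq_right x.2.1, min_eq_right x.2.2]

lemma measurable_projc : Measurable projc :=
  Measurable.subtype_mk ((continuous_const.min (continuous_const.max continuous_id)).measurable)

variable (X : RISpace)

lemma lemA (f : UI → ℝ) (hf : X.Mem f) (hf1 : X.normF f ≤ 1) :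
    ∫ x : UI, |f x| * dyadE 1 1 x ∂lambdaI ≤ 1 / (2 * X.normF (dyadE 1 1)) := by
  have hN1 := norm_e1_pos X
  have hfm := X.measurable_of_mem f hf
  set HN : ℕ → ℝ → ℝ := fun N y =>
    if y ∈ Ioc (0:ℝ) (1/2) then min |f (projc y)| (N:ℝ) else 0 with hHN
  have hHNval : ∀ (N : ℕ) (y : ℝ), HN N y =
      if y ∈ Ioc (0:ℝ) (1/2) then min |f (projc y)| (N:ℝ) else 0 := fun N y => rfl
  have hHNmeas : ∀ N, Measurable (HN N) := fun N =>
    Measurable.ite measurableSet_Ioc (((hfm.comp measurable_projc).abs).min measurable_const)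
      measurable_const
  have hHN0 : ∀ N y, 0 ≤ HN N y := by
    intro N y
    rw [hHNval]
    split_ifs with hy
    · exact le_min (abs_nonneg _) (Nat.cast_nonneg N)
    · exact le_rfl
  have hHNM : ∀ N y, HN N y ≤ (N:ℝ) := by
    intro N y
    rw [hHNval]
    split_ifs with hy
    · exact min_le_right _ _
    · exact Nat.cast_nonneg N
  have hHNsupp : ∀ N y, y ∉ Ioc (0:ℝ) (1/2) → HN N y = 0 := by
    intro N y hy
    rw [hHNval, if_neg hy]
  have hval : ∀ (N : ℕ) (x : UI), HN N x.val =
      if (x.val) ∈ Ioc (0:ℝ) (1/2) then min |f x| (N:ℝ) else 0 := by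
    intro N x
    rw [hHNval, projc_val]
  have habs : ∀ N, ∀ᵐ x ∂lambdaI, |(fun x : UI => HN N x.val) x| ≤ |f x| := by
    intro N
    refine MeasureTheory.ae_of_all _ fun x => ?_
    show |HN N x.val| ≤ |f x|
    rw [hval]
    split_ifs with hy
    · rw [abs_of_nonneg (le_min (abs_nonneg _) (Nat.cast_nonneg N))]
      exact min_le_left _ _
    · simp [abs_nonneg]
  have hmemN : ∀ N, X.Mem (fun x : UI => HN N x.val) := fun N =>
    X.mem_of_le _ f ((hHNmeas N).comp measurable_subtype_coe) hf (habs N)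
  have hnormN : ∀ N, X.normF (fun x : UI => HN N x.val) ≤ 1 := fun N =>
    le_trans (X.norm_mono _ f (hmemN N) hf (habs N)) hf1
  have hcore : ∀ N : ℕ, 2 * (∫ y, HN N y) * X.normF (dyadE 1 1) ≤ 1 := fun N =>
    le_trans (core X (HN N) N (hHNmeas N) (hHN0 N) (hHNM N) (hHNsupp N) (hmemN N)) (hnormN N)
  have htrans : ∀ N, ∫ y, HN N y = ∫ x : UI, HN N x.val ∂lambdaI := fun N => by
    rw [integral_UI (HN N), restrict_eq_glob (HN N) (hHNsupp N)]
  set F : UI → ℝ := fun x => |f x| * dyadE 1 1 x with hF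
  have hFval : ∀ x : UI, F x = |f x| * dyadE 1 1 x := fun x => rfl
  have hFint : Integrable F lambdaI := by
    refine Integrable.mono' (integrable_mem X f hf).abs
      ((hfm.abs.mul (measurable_dyadE 1 1)).aestronglyMeasurable)
      (MeasureTheory.ae_of_all _ fun x => ?_)
    rw [hFval, Real.norm_eq_abs, e1_eq]
    dsimp only
    split_ifs
    · simp [abs_abs]
    · simp [abs_nonneg]
  have hmono : ∀ x : UI, Monotone fun N : ℕ => HN N x.val := by
    intro x a b hab
    show HN a x.val ≤ HN b x.val
    rw [hval, hval]
    split_ifs with hy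
    · exact min_le_min le_rfl (by exact_mod_cast hab)
    · exact le_rfl
  have htendpt : ∀ x : UI, Tendsto (fun N => HN N x.val) atTop (nhds (F x)) := by
    intro x
    rw [hFval, e1_val]
    by_cases hy : (x.val) ∈ Ioc (0:ℝ) (1/2)
    · have hev : ∀ N : ℕ, N ≥ ⌈|f x|⌉₊ → HN N x.val = |f x| := by
        intro N hN
        rw [hval, if_pos hy, min_eq_left]
        calc |f x| ≤ (⌈|f x|⌉₊ : ℝ) := Nat.le_ceil _
          _ ≤ N := by exact_mod_cast hN
      rw [ind1, if_pos hy, mul_one]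
      exact tendsto_atTop_of_eventually_const hev
    · have hzero : ∀ N : ℕ, HN N x.val = 0 := fun N => by rw [hval, if_neg hy]
      rw [ind1, if_neg hy, mul_zero]
      simpa [hzero] using (tendsto_const_nhds :
        Tendsto (fun _ : ℕ => (0:ℝ)) atTop (nhds 0))
  have hIntN : ∀ N : ℕ, Integrable (fun x : UI => HN N x.val) lambdaI := fun N =>
    integrable_bdd _ ((hHNmeas N).comp measurable_subtype_coe) N (fun x => by
      rw [abs_of_nonneg (hHN0 N _)]; exact hHNM N _)
  have hconv := MeasureTheory.integral_tendsto_of_tendsto_of_monotone hIntN hFint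
    (MeasureTheory.ae_of_all _ hmono) (MeasureTheory.ae_of_all _ htendpt)
  have hre : (fun N : ℕ => 2 * (∫ y, HN N y) * X.normF (dyadE 1 1))
      = fun N : ℕ => 2 * (∫ x : UI, HN N x.val ∂lambdaI) * X.normF (dyadE 1 1) :=
    funext fun N => by rw [htrans N]
  have hlim : Tendsto (fun N : ℕ => 2 * (∫ y, HN N y) * X.normF (dyadE 1 1)) atTop
      (nhds (2 * (∫ x : UI, F x ∂lambdaI) * X.normF (dyadE 1 1))) := by
    rw [hre]
    exact (hconv.const_mul 2).mul_const _
  have hfin : 2 * (∫ x : UI, F x ∂lambdaI) * X.normF (dyadE 1 1) ≤ 1 :=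
    le_of_tendsto' hlim hcore
  rw [le_div_iff₀ (by positivity)]
  calc (∫ x : UI, |f x| * dyadE 1 1 x ∂lambdaI) * (2 * X.normF (dyadE 1 1))
      = 2 * (∫ x : UI, F x ∂lambdaI) * X.normF (dyadE 1 1) := by rw [hF]; ring
    _ ≤ 1 := hfin

end LemA
section Flip

def flipR : ℝ → ℝ := rot 1 (1/2)

lemma flip_hyp1 : (0:ℝ) < 1/2 := by norm_num
lemma flip_hyp2 : (1:ℝ)/2 < 1 := by norm_num

lemma flip_iff : ∀ x : ℝ, x ∈ I01 ↔ flipR x ∈ I01 :=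
  rot_iff flip_hyp1 flip_hyp2 le_rfl

lemma flip_inv : ∀ y, flipR (flipR y) = y := fun y => by
  have h := rot_left_inv flip_hyp1 flip_hyp2 y
  rwa [show (1:ℝ) - 1/2 = 1/2 from by norm_num] at h

def flipU : UI → UI := uiOf flipR flip_iff

lemma flipU_flipU (x : UI) : flipU (flipU x) = x := Subtype.ext (flip_inv x.val)

def flipE : UI ≃ᵐ UI where
  toEquiv := ⟨flipU, flipU, flipU_flipU, flipU_flipU⟩
  measurable_toFun := measurable_uiOf flip_iff measurable_rot
  measurable_invFun := measurable_uiOf flip_iff measurable_rot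

lemma mp_flipU : MeasurePreserving flipU lambdaI lambdaI :=
  mp_uiOf flip_iff measurable_rot (measurePreserving_rot flip_hyp1 flip_hyp2)

lemma int_comp_flip (Q : UI → ℝ) : ∫ x, Q (flipU x) ∂lambdaI = ∫ x, Q x ∂lambdaI :=
  mp_flipU.integral_comp
    (show MeasurableEmbedding flipU from flipE.measurableEmbedding) Q

lemma e1_flip (x : UI) : dyadE 1 1 (flipU x) = dyadE 1 2 x := by
  rw [e1_eq, e2_eq]
  show (if (flipR x.val) ∈ Ioc (0:ℝ) (1/2) then (1:ℝ) else 0)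
    = if (x.val) ∈ Ioc (1/2:ℝ) 1 then (1:ℝ) else 0
  by_cases h1 : x.val ∈ Ioc (0:ℝ) (1 - 1/2)
  · rw [show flipR x.val = x.val + 1/2 from rot_in1 h1]
    rcases h1 with ⟨a, b⟩
    rw [if_neg, if_neg]
    · rw [Set.mem_Ioc]; push_neg; intro h; linarith
    · rw [Set.mem_Ioc]; push_neg; intro h; linarith
  · by_cases h2 : x.val ∈ Ioc ((1:ℝ) - 1/2) 1
    · rw [show flipR x.val = x.val + 1/2 - 1 from rot_in2 h1 h2]
      rcases h2 with ⟨a, b⟩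
      rw [if_pos, if_pos]
      · rw [Set.mem_Ioc]; constructor <;> linarith
      · rw [Set.mem_Ioc]; constructor <;> linarith
    · have hx : x.val ∉ Ioc (0:ℝ) 1 := by
        rw [Set.mem_Ioc] at h1 h2 ⊢
        push_neg at h1 h2 ⊢
        intro h0
        exact h2 (h1 h0)
      rw [show flipR x.val = x.val from rot_out hx flip_hyp1 flip_hyp2]
      rw [Set.mem_Ioc] at hx
      push_neg at hx
      rw [if_neg, if_neg]
      · rw [Set.mem_Ioc]; push_neg; intro h; linarith [hx (by linarith : (0:ℝ) < x.val)]
      · rw [Set.mem_Ioc]; push_neg; intro h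
        have h0 : (0:ℝ) < x.val := h
        linarith [hx h0]

lemma e2_flip (x : UI) : dyadE 1 2 (flipU x) = dyadE 1 1 x := by
  have h := e1_flip (flipU x)
  rw [flipU_flipU] at h
  exact h.symm

variable (X : RISpace)

lemma rearr_flip (f : UI → ℝ) :
    (X.Mem f ↔ X.Mem (f ∘ flipU)) ∧ (X.Mem f → X.normF (f ∘ flipU) = X.normF f) :=
  rearrX X flip_iff flip_iff measurable_rot measurable_rot
    (measurePreserving_rot flip_hyp1 flip_hyp2) flip_inv flip_inv f

lemma lemA2 (f : UI → ℝ) (hf : X.Mem f) (hf1 : X.normF f ≤ 1) :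
    ∫ x : UI, |f x| * dyadE 1 2 x ∂lambdaI ≤ 1 / (2 * X.normF (dyadE 1 1)) := by
  have hm2 : X.Mem (f ∘ flipU) := (rearr_flip X f).1.mp hf
  have hn2 : X.normF (f ∘ flipU) ≤ 1 := by
    rw [(rearr_flip X f).2 hf]; exact hf1
  have hbound := lemA X (f ∘ flipU) hm2 hn2
  calc ∫ x : UI, |f x| * dyadE 1 2 x ∂lambdaI
      = ∫ x : UI, |f (flipU x)| * dyadE 1 2 (flipU x) ∂lambdaI :=
        (int_comp_flip (fun x => |f x| * dyadE 1 2 x)).symm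
    _ = ∫ x : UI, |(f ∘ flipU) x| * dyadE 1 1 x ∂lambdaI := by
        refine MeasureTheory.integral_congr_ae (Filter.EventuallyEq.of_eq (funext fun x => ?_))
        rw [e2_flip]
        rfl
    _ ≤ 1 / (2 * X.normF (dyadE 1 1)) := hbound

end Flip
section MainProof

lemma e1_nonneg (x : UI) : 0 ≤ dyadE 1 1 x := by
  rw [e1_eq]; dsimp only; split_ifs <;> norm_num

lemma e2_nonneg (x : UI) : 0 ≤ dyadE 1 2 x := by
  rw [e2_eq]; dsimp only; split_ifs <;> norm_num

lemma e1_le_one (x : UI) : dyadE 1 1 x ≤ 1 := by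
  rw [e1_eq]; dsimp only; split_ifs <;> norm_num

lemma e2_le_one (x : UI) : dyadE 1 2 x ≤ 1 := by
  rw [e2_eq]; dsimp only; split_ifs <;> norm_num

lemma e1_sq (x : UI) : dyadE 1 1 x * dyadE 1 1 x = dyadE 1 1 x := by
  rw [e1_eq]; dsimp only; split_ifs <;> ring

lemma e2_sq (x : UI) : dyadE 1 2 x * dyadE 1 2 x = dyadE 1 2 x := by
  rw [e2_eq]; dsimp only; split_ifs <;> ring

lemma e1e2 (x : UI) : dyadE 1 1 x * dyadE 1 2 x = 0 := by
  rw [e1_eq, e2_eq]; dsimp only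
  split_ifs with h1 h2
  · exfalso; rcases h1 with ⟨a, b⟩; rcases h2 with ⟨c, d⟩; linarith
  all_goals ring

lemma int_e1able : Integrable (dyadE 1 1) lambdaI :=
  integrable_bdd _ (measurable_dyadE 1 1) 1 fun x => by
    rw [abs_of_nonneg (e1_nonneg x)]; exact e1_le_one x

lemma int_e2able : Integrable (dyadE 1 2) lambdaI :=
  integrable_bdd _ (measurable_dyadE 1 2) 1 fun x => by
    rw [abs_of_nonneg (e2_nonneg x)]; exact e2_le_one x

lemma int_e1 : ∫ x : UI, dyadE 1 1 x ∂lambdaI = 1/2 := by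
  simp only [e1_eq]
  rw [int_ind (by norm_num) (by norm_num) (by norm_num)]
  norm_num

lemma int_e2 : ∫ x : UI, dyadE 1 2 x ∂lambdaI = 1/2 := by
  simp only [e2_eq]
  rw [int_ind (by norm_num) (by norm_num) (by norm_num)]
  norm_num

variable (X : RISpace)

lemma int_fe (f : UI → ℝ) (hf : X.Mem f) (e : UI → ℝ) (hm : Measurable e)
    (h0 : ∀ x, 0 ≤ e x) (h1 : ∀ x, e x ≤ 1) :
    Integrable (fun x : UI => |f x| * e x) lambdaI := by
  refine Integrable.mono' (integrable_mem X f hf).abs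
    (((X.measurable_of_mem f hf).abs.mul hm).aestronglyMeasurable)
    (MeasureTheory.ae_of_all _ fun x => ?_)
  rw [Real.norm_eq_abs, abs_mul, abs_of_nonneg (h0 x), abs_abs]
  calc |f x| * e x ≤ |f x| * 1 := mul_le_mul_of_nonneg_left (h1 x) (abs_nonneg _)
    _ = |f x| := mul_one _

theorem stmt12_aux : X.PropP ∨ X.PropP' := by
  by_cases hP : X.PropP
  · exact Or.inl hP
  right
  unfold RISpace.PropP at hP
  push_neg at hP
  obtain ⟨t, ht, hle⟩ := hP
  intro s hs
  have hN1 := norm_e1_pos X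
  have hmem12 : X.Mem (dyadE 1 1 + t • dyadE 1 2) :=
    X.add_mem _ _ (mem_dyadE X 1 1) (X.smul_mem _ _ (mem_dyadE X 1 2))
  have happ : ∀ (r : ℝ) (x : UI),
      (dyadE 1 1 + r • dyadE 1 2) x = dyadE 1 1 x + r * dyadE 1 2 x := by
    intro r x
    simp [Pi.add_apply, Pi.smul_apply, smul_eq_mul]
  have hnn : ∀ (r : ℝ), 0 ≤ r → ∀ x : UI, 0 ≤ dyadE 1 1 x + r * dyadE 1 2 x :=
    fun r hr x => add_nonneg (e1_nonneg x) (mul_nonneg hr (e2_nonneg x))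
  have hBeqN1 : X.normF (dyadE 1 1 + t • dyadE 1 2) = X.normF (dyadE 1 1) := by
    refine le_antisymm hle (X.norm_mono _ _ (mem_dyadE X 1 1) hmem12
      (MeasureTheory.ae_of_all _ fun x => ?_))
    rw [happ, abs_of_nonneg (e1_nonneg x), abs_of_nonneg (hnn t ht.le x)]
    have := mul_nonneg ht.le (e2_nonneg x)
    linarith
  set B := X.normF (dyadE 1 1 + t • dyadE 1 2) with hBdef
  have hBpos : 0 < B := hBeqN1 ▸ hN1
  set f0 : UI → ℝ := B⁻¹ • (dyadE 1 1 + t • dyadE 1 2) with hf0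
  have hf0mem : X.Mem f0 := X.smul_mem _ _ hmem12
  have hf0norm : X.normF f0 ≤ 1 := by
    rw [hf0, X.norm_smul' _ _ hmem12, abs_of_pos (inv_pos.mpr hBpos), ← hBdef,
      inv_mul_cancel₀ hBpos.ne']
  have hptprod : ∀ x : UI, |f0 x| * |(dyadE 1 1 + s • dyadE 1 2) x|
      = B⁻¹ * (dyadE 1 1 x + (t*s) * dyadE 1 2 x) := by
    intro x
    have hfx : f0 x = B⁻¹ * (dyadE 1 1 x + t * dyadE 1 2 x) := by
      rw [hf0, Pi.smul_apply, smul_eq_mul, happ]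
    rw [hfx, happ, abs_mul, abs_of_pos (inv_pos.mpr hBpos),
      abs_of_nonneg (hnn t ht.le x), abs_of_nonneg (hnn s hs.le x)]
    rw [mul_assoc]
    congr 1
    linear_combination e1_sq x + (s + t) * e1e2 x + (t*s) * e2_sq x
  have hint_lin : ∀ r : ℝ,
      ∫ x : UI, (dyadE 1 1 x + r * dyadE 1 2 x) ∂lambdaI = (1 + r)/2 := by
    intro r
    rw [MeasureTheory.integral_add int_e1able (int_e2able.const_mul r),
      MeasureTheory.integral_const_mul, int_e1, int_e2]
    ring
  have hval : ∫ x : UI, |f0 x| * |(dyadE 1 1 + s • dyadE 1 2) x| ∂lambdaI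
      = B⁻¹ * ((1 + t*s)/2) := by
    rw [MeasureTheory.integral_congr_ae (Filter.EventuallyEq.of_eq (funext hptprod)),
      MeasureTheory.integral_const_mul, hint_lin (t*s)]
  have hd1 : X.dualNormF (dyadE 1 1) ≤ 1/(2 * X.normF (dyadE 1 1)) := by
    rw [KotheSpace.dualNormF]
    apply Real.sSup_le
    · rintro r ⟨f, hfmem, hfnorm, rfl⟩
      have heq : ∫ x : UI, |f x| * |dyadE 1 1 x| ∂lambdaI
          = ∫ x : UI, |f x| * dyadE 1 1 x ∂lambdaI := by
        refine MeasureTheory.integral_congr_ae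
          (Filter.EventuallyEq.of_eq (funext fun x => ?_))
        rw [abs_of_nonneg (e1_nonneg x)]
      rw [heq]
      exact lemA X f hfmem hfnorm
    · rw [le_div_iff₀ (by linarith)]
      linarith
  have hbdd2 : BddAbove {r : ℝ | ∃ f, X.Mem f ∧ X.normF f ≤ 1 ∧
      r = ∫ x : UI, |f x| * |(dyadE 1 1 + s • dyadE 1 2) x| ∂lambdaI} := by
    refine ⟨(1 + s) * (1/(2 * X.normF (dyadE 1 1))), ?_⟩
    rintro r ⟨f, hfmem, hfnorm, rfl⟩
    have heq : ∀ x : UI, |f x| * |(dyadE 1 1 + s • dyadE 1 2) x|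
        = |f x| * dyadE 1 1 x + s * (|f x| * dyadE 1 2 x) := by
      intro x
      rw [happ, abs_of_nonneg (hnn s hs.le x)]
      ring
    rw [MeasureTheory.integral_congr_ae (Filter.EventuallyEq.of_eq (funext heq)),
      MeasureTheory.integral_add
        (int_fe X f hfmem _ (measurable_dyadE 1 1) e1_nonneg e1_le_one)
        ((int_fe X f hfmem _ (measurable_dyadE 1 2) e2_nonneg e2_le_one).const_mul s),
      MeasureTheory.integral_const_mul]
    calc (∫ x : UI, |f x| * dyadE 1 1 x ∂lambdaI)
          + s * ∫ x : UI, |f x| * dyadE 1 2 x ∂lambdaI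
        ≤ 1/(2 * X.normF (dyadE 1 1)) + s * (1/(2 * X.normF (dyadE 1 1))) :=
          add_le_add (lemA X f hfmem hfnorm)
            (mul_le_mul_of_nonneg_left (lemA2 X f hfmem hfnorm) hs.le)
      _ = (1 + s) * (1/(2 * X.normF (dyadE 1 1))) := by ring
  have hge : B⁻¹ * ((1 + t*s)/2) ≤ X.dualNormF (dyadE 1 1 + s • dyadE 1 2) := by
    rw [KotheSpace.dualNormF]
    exact le_csSup hbdd2 ⟨f0, hf0mem, hf0norm, hval.symm⟩
  have hgt : 1/(2 * X.normF (dyadE 1 1)) < B⁻¹ * ((1 + t*s)/2) := by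
    rw [hBeqN1]
    have hts : 0 < t * s := mul_pos ht hs
    rw [show (1:ℝ)/(2 * X.normF (dyadE 1 1)) = (X.normF (dyadE 1 1))⁻¹ * (1/2) by
      rw [one_div, mul_inv]; ring]
    apply mul_lt_mul_of_pos_left _ (inv_pos.mpr hN1)
    linarith
  exact lt_of_le_of_lt hd1 (lt_of_lt_of_le hgt hge)

end MainProof
end Stmt12

/-- Lemma 5.2: every r.i. space on `[0,1]` has property (P) or property (P'). -/
theorem stmt12 (X : RISpace) : X.PropP ∨ X.PropP' := by exact Stmt12.stmt12_aux X


end
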